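/- arXiv:2007.12801 — 13 statements merged into one kernel-verified Lean document; each statement's English description precedes it below -/
import Mathlib

section
/- Let r, c, m, p > 0 and 0 < a < 1. Suppose u, v : [0, ∞) → ℝ are differentiable functions satisfying u'(t) = r·u(t)·(1−u(t))·(u(t)−a) − (1+c·v(t))·u(t)·v(t) and v'(t) = m·v(t)·(p·u(t)·(1+c·v(t)) − 1) for all t ≥ 0, with u(0) > 0 and v(0) > 0. Then u(t) > 0 and v(t) > 0 for all t ≥ 0, u(t) ≤ max{u(0), 1} for all t ≥ 0, and v is bounded on [0, ∞), i.e., there exists M > 0 with v(t) ≤ M for all t ≥ 0. -/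
/-!
Both equations are of the form `w' = g(t) w`, so `w · exp (-∫ g)` is constant and positivity
propagates from the initial data. At the level `u = max (u 0) 1 ≥ 1` the Allee growth term is
non-positive while predation is strictly positive, so `u` cannot cross that level. Finally
`W = p u + v / m` satisfies `W' = p u (r (1 - u) (u - a) + m) - m W ≤ C - m W`, because the
cooperative-hunting terms cancel and `u` is bounded; Grönwall bounds `W`, hence `v`.
-/

open Real Set

theorem pos_of_hasDerivAt_mul_self {g w : ℝ → ℝ} (hg : ContinuousOn g (Ici 0))
    (hw : ∀ t, 0 ≤ t → HasDerivAt w (g t * w t) t) (h0 : 0 < w 0) {t : ℝ} (ht : 0 ≤ t) :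
    0 < w t := by
  -- extend `g` to the left of `0` so that its primitive is differentiable at `0` too
  set gext : ℝ → ℝ := fun s => g (max s 0)
  have hgext : Continuous gext :=
    hg.comp_continuous (continuous_id.max continuous_const) fun s => le_max_right s 0
  set G : ℝ → ℝ := fun s => ∫ σ in (0 : ℝ)..s, gext σ
  have hG : ∀ s, HasDerivAt G (gext s) s := fun s =>
    (hgext.integral_hasStrictDerivAt 0 s).hasDerivAt
  have hconst : w t * exp (-G t) = w 0 * exp (-G 0) := by
    refine constant_of_has_deriv_right_zero (f := fun s => w s * exp (-G s)) ?_ ?_ t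
      ⟨ht, le_rfl⟩
    · exact fun x hx =>
        ((hw x hx.1).continuousAt.mul (hG x).neg.exp.continuousAt).continuousWithinAt
    · intro x hx
      refine ((hw x hx.1).mul (hG x).neg.exp).hasDerivWithinAt.congr_deriv ?_
      simp only [gext, max_eq_left hx.1]
      ring
  have hG0 : G 0 = 0 := intervalIntegral.integral_same
  rw [hG0, neg_zero, exp_zero, mul_one] at hconst
  exact pos_of_mul_pos_left (hconst ▸ h0) (exp_pos _).le

theorem le_of_hasDerivAt_neg_of_eq {f f' : ℝ → ℝ} {B : ℝ}
    (hf : ∀ t, 0 ≤ t → HasDerivAt f (f' t) t) (h0 : f 0 ≤ B)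
    (hB : ∀ t, 0 ≤ t → f t = B → f' t < 0) {t : ℝ} (ht : 0 ≤ t) : f t ≤ B :=
  image_le_of_deriv_right_lt_deriv_boundary (B := fun _ => B) (B' := 0)
    (fun x hx => (hf x hx.1).continuousAt.continuousWithinAt)
    (fun x hx => (hf x hx.1).hasDerivWithinAt) h0 (fun _ => hasDerivAt_const _ _)
    (fun x hx => hB x hx.1) ⟨ht, le_rfl⟩

theorem le_max_div_of_hasDerivAt_le_sub_mul {f f' : ℝ → ℝ} {m C : ℝ} (hm : 0 < m)
    (hf : ∀ t, 0 ≤ t → HasDerivAt f (f' t) t)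
    (hbound : ∀ t, 0 ≤ t → f' t ≤ C - m * f t)
    {t : ℝ} (ht : 0 ≤ t) : f t ≤ max (f 0) (C / m) := by
  have hgron := le_gronwallBound_of_liminf_deriv_right_le (K := -m) (ε := C)
    (fun x hx => (hf x hx.1).continuousAt.continuousWithinAt)
    (fun x hx _ hr => (hf x hx.1).hasDerivWithinAt.liminf_right_slope_le hr) le_rfl
    (fun x hx => by linarith [hbound x hx.1]) t ⟨ht, le_rfl⟩
  rw [gronwallBound_of_K_ne_0 (neg_ne_zero.2 hm.ne'), sub_zero] at hgron
  set e := exp (-m * t)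
  have he1 : e ≤ 1 := exp_le_one_iff.2 (by nlinarith)
  -- the Grönwall bound is a convex combination of `f 0` and the equilibrium level `C / m`
  calc f t ≤ e * f 0 + (1 - e) * (C / m) := by
        convert hgron using 1
        rw [div_neg]
        ring
    _ ≤ e * max (f 0) (C / m) + (1 - e) * max (f 0) (C / m) := by
        have he0 : 0 ≤ e := (exp_pos _).le
        have he1' : 0 ≤ 1 - e := by linarith
        gcongr
        exacts [le_max_left _ _, le_max_right _ _]
    _ = max (f 0) (C / m) := by ring

theorem prey_rate_neg_of_one_le {r c a u v : ℝ} (hr : 0 ≤ r) (hc : 0 ≤ c) (ha : a < 1)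
    (hu : 1 ≤ u) (hv : 0 < v) : r * u * (1 - u) * (u - a) - (1 + c * v) * u * v < 0 := by
  have hgrowth : r * u * (1 - u) * (u - a) ≤ 0 :=
    mul_nonpos_of_nonpos_of_nonneg
      (mul_nonpos_of_nonneg_of_nonpos (by positivity) (by linarith)) (by linarith)
  have hpredation : 0 < (1 + c * v) * u * v := by positivity
  linarith

theorem allee_growth_le {r a m u B : ℝ} (hr : 0 ≤ r) (hm : 0 ≤ m) (hu : 0 ≤ u)
    (huB : u ≤ B) :
    u * (r * (1 - u) * (u - a) + m) ≤ B * (r * (1 - a) ^ 2 / 4 + m) := by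
  have hquad : (1 - u) * (u - a) ≤ (1 - a) ^ 2 / 4 := by nlinarith [sq_nonneg (u - (1 + a) / 2)]
  calc u * (r * (1 - u) * (u - a) + m) ≤ u * (r * (1 - a) ^ 2 / 4 + m) := by
        rw [mul_assoc, mul_div_assoc]
        gcongr
    _ ≤ B * (r * (1 - a) ^ 2 / 4 + m) := by gcongr

theorem stmt_0_general (r c m p a : ℝ) (hr : 0 < r) (hc : 0 < c) (hm : 0 < m) (hp : 0 < p)
    (ha1 : a < 1) (u v : ℝ → ℝ)
    (hu : ∀ t : ℝ, 0 ≤ t →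
      HasDerivAt u (r * u t * (1 - u t) * (u t - a) - (1 + c * v t) * u t * v t) t)
    (hv : ∀ t : ℝ, 0 ≤ t →
      HasDerivAt v (m * v t * (p * u t * (1 + c * v t) - 1)) t)
    (hu0 : 0 < u 0) (hv0 : 0 < v 0) :
    (∀ t : ℝ, 0 ≤ t → 0 < u t ∧ 0 < v t) ∧
    (∀ t : ℝ, 0 ≤ t → u t ≤ max (u 0) 1) ∧
    (∃ M : ℝ, 0 < M ∧ ∀ t : ℝ, 0 ≤ t → v t ≤ M) := by
  have hu_cont : ContinuousOn u (Ici 0) := fun t ht => (hu t ht).continuousAt.continuousWithinAt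
  have hv_cont : ContinuousOn v (Ici 0) := fun t ht => (hv t ht).continuousAt.continuousWithinAt
  have hu_pos : ∀ t, 0 ≤ t → 0 < u t := fun t ht =>
    pos_of_hasDerivAt_mul_self (g := fun t => r * (1 - u t) * (u t - a) - (1 + c * v t) * v t)
      (by fun_prop) (fun t ht => (hu t ht).congr_deriv (by ring)) hu0 ht
  have hv_pos : ∀ t, 0 ≤ t → 0 < v t := fun t ht =>
    pos_of_hasDerivAt_mul_self (g := fun t => m * (p * u t * (1 + c * v t) - 1))
      (by fun_prop) (fun t ht => (hv t ht).congr_deriv (by ring)) hv0 ht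
  have hu_le : ∀ t, 0 ≤ t → u t ≤ max (u 0) 1 := fun t ht =>
    le_of_hasDerivAt_neg_of_eq hu (le_max_left _ _) (fun s hs hus =>
      prey_rate_neg_of_one_le hr.le hc.le ha1 (hus ▸ le_max_right _ _) (hv_pos s hs)) ht
  set W : ℝ → ℝ := fun t => p * u t + v t / m
  have hW : ∀ t, 0 ≤ t →
      HasDerivAt W (p * (u t * (r * (1 - u t) * (u t - a) + m)) - m * W t) t := fun t ht =>
    ((hu t ht).const_mul p).add ((hv t ht).div_const m) |>.congr_deriv
      (by simp only [W]; field_simp; ring)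
  set C := p * (max (u 0) 1 * (r * (1 - a) ^ 2 / 4 + m))
  have hW_le := fun t (ht : 0 ≤ t) => le_max_div_of_hasDerivAt_le_sub_mul hm hW (fun s hs =>
    sub_le_sub_right (mul_le_mul_of_nonneg_left
      (allee_growth_le (a := a) hr.le hm.le (hu_pos s hs).le (hu_le s hs)) hp.le) _) ht
  refine ⟨fun t ht => ⟨hu_pos t ht, hv_pos t ht⟩, hu_le, m * max (W 0) (C / m),
    mul_pos hm (lt_max_of_lt_left (by positivity)), fun t ht => ?_⟩
  have hWt : v t = m * W t - m * p * u t := by simp only [W]; field_simp; ring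
  nlinarith [hW_le t ht, hu_pos t ht, mul_pos hm hp]

/-- Positivity and boundedness of solutions of the predator-prey system with
cooperative hunting and Allee effect. -/
theorem stmt_0 (r c m p a : ℝ) (hr : 0 < r) (hc : 0 < c) (hm : 0 < m) (hp : 0 < p)
    (ha0 : 0 < a) (ha1 : a < 1) (u v : ℝ → ℝ)
    (hu : ∀ t : ℝ, 0 ≤ t →
      HasDerivAt u (r * u t * (1 - u t) * (u t - a) - (1 + c * v t) * u t * v t) t)
    (hv : ∀ t : ℝ, 0 ≤ t →
      HasDerivAt v (m * v t * (p * u t * (1 + c * v t) - 1)) t)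
    (hu0 : 0 < u 0) (hv0 : 0 < v 0) :
    (∀ t : ℝ, 0 ≤ t → 0 < u t ∧ 0 < v t) ∧
    (∀ t : ℝ, 0 ≤ t → u t ≤ max (u 0) 1) ∧
    (∃ M : ℝ, 0 < M ∧ ∀ t : ℝ, 0 ≤ t → v t ≤ M) :=
  stmt_0_general r c m p a hr hc hm hp ha1 u v hu hv hu0 hv0
end

section
/- Let r, c, m, p > 0 and 0 < a < 1. If p ≥ 1/a, then the system has no interior equilibrium; that is, there is no pair (u, v) with u > 0 and v > 0 satisfying r·(1−u)·(u−a) = (1+c·v)·v and p·u·(1+c·v) = 1. -/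
/-- If `p ≥ 1/a` the predator-prey system with cooperative hunting and Allee effect
has no interior equilibrium. -/
theorem stmt_1 (r c m p a : ℝ) (hr : 0 < r) (hc : 0 < c) (hm : 0 < m) (hp : 0 < p)
    (ha0 : 0 < a) (ha1 : a < 1) (hpa : 1 / a ≤ p) :
    ¬ ∃ u v : ℝ, 0 < u ∧ 0 < v ∧
      r * (1 - u) * (u - a) = (1 + c * v) * v ∧ p * u * (1 + c * v) = 1 := by
  rintro ⟨u, v, hu, hv, h1, h2⟩
  have hw : 1 < 1 + c * v := by nlinarith
  -- from h2 and hpa : u * (1 + c*v) ≤ a, hence u < a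
  have hua : u < a := by
    have h3 : u * (1 + c * v) ≤ a := by
      have hpa' : 1 ≤ p * a := by
        rw [div_le_iff₀ ha0] at hpa; linarith
      nlinarith
    nlinarith
  have hL : r * (1 - u) * (u - a) < 0 :=
    mul_neg_of_pos_of_neg (mul_pos hr (by linarith)) (by linarith)
  have hR : 0 < (1 + c * v) * v := mul_pos (by linarith) hv
  linarith
end

section
/- Let r, c, m, p > 0 and 0 < a < 1, and suppose c < 1/(r·(1−a)) (weak cooperation). If 1 < p < 1/a, then the system has a unique interior equilibrium (u*, v*), i.e., a unique pair with u* > 0, v* > 0, r·(1−u*)·(u*−a) = (1+c·v*)·v* and p·u*·(1+c·v*) = 1; moreover a < u* < 1/p. -/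
/-!
The predator equation forces `v = (1 - p u) / (c p u)`, which is positive exactly for `u < 1 / p`.
Substituting it into the prey equation leaves one equation `G(u) = 0` in `u` alone
(`G = nullclineGap`). `G(a) < 0` since `p a < 1`, and `G(1 / p) > 0`, so a root exists in
`(a, 1 / p)`; under weak cooperation `G` is strictly increasing on `(0, 1 / p)`, so the root is
unique.
-/

open Set

noncomputable section

def predatorNullcline (c p u : ℝ) : ℝ := (1 - p * u) / (c * p * u)

def nullclineGap (r c p a u : ℝ) : ℝ :=
  r * (1 - u) * (u - a) - (1 + c * predatorNullcline c p u) * predatorNullcline c p u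

end

section

variable {r c p a u v : ℝ}

lemma predator_eq_iff (hc : c ≠ 0) (hp : p ≠ 0) (hu : u ≠ 0) :
    p * u * (1 + c * v) = 1 ↔ v = predatorNullcline c p u := by
  unfold predatorNullcline
  rw [eq_div_iff (by positivity)]
  constructor <;> intro h <;> linear_combination h

lemma predatorNullcline_pos (hc : 0 < c) (hp : 0 < p) (hu : 0 < u) (hup : u < 1 / p) :
    0 < predatorNullcline c p u := by
  have : p * u < 1 := by rwa [lt_div_iff₀ hp, mul_comm] at hup
  unfold predatorNullcline
  exact div_pos (by linarith) (by positivity)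

lemma nullclineGap_eq (hc : c ≠ 0) (hp : p ≠ 0) (hu : u ≠ 0) :
    nullclineGap r c p a u = r * (1 - u) * (u - a) - (1 - p * u) / (c * p ^ 2 * u ^ 2) := by
  unfold nullclineGap predatorNullcline
  field_simp
  ring

lemma continuousOn_nullclineGap {s : Set ℝ} (hc : c ≠ 0) (hp : p ≠ 0)
    (hs : ∀ u ∈ s, u ≠ 0) :
    ContinuousOn (nullclineGap r c p a) s := by
  unfold nullclineGap predatorNullcline
  fun_prop (disch := exact fun u hu => by have := hs u hu; positivity)

/- Weak cooperation is what keeps the difference quotients positive: the prey nullcline contributes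
more than `-r (1 - a)` and the predator nullcline more than `1 / c`. -/
lemma nullclineGap_strictMonoOn (hr : 0 ≤ r) (hc : 0 < c) (hp : 1 ≤ p)
    (hcr : c * r * (1 - a) < 1) :
    StrictMonoOn (nullclineGap r c p a) (Ioo 0 (1 / p)) := by
  rintro u₁ ⟨hu₁, hu₁p⟩ u₂ ⟨hu₂, hu₂p⟩ h
  have hp0 : 0 < p := by linarith
  have hpu₁ : p * u₁ < 1 := by rwa [lt_div_iff₀ hp0, mul_comm] at hu₁p
  have hpu₂ : p * u₂ < 1 := by rwa [lt_div_iff₀ hp0, mul_comm] at hu₂p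
  have hu₂1 : u₂ < 1 := lt_of_lt_of_le hu₂p (by rw [div_le_one hp0]; exact hp)
  have hdiff : nullclineGap r c p a u₂ - nullclineGap r c p a u₁ =
      (u₂ - u₁) * (r * (1 + a - u₁ - u₂) +
        (u₁ + u₂ - p * u₁ * u₂) / (c * p ^ 2 * u₁ ^ 2 * u₂ ^ 2)) := by
    rw [nullclineGap_eq hc.ne' hp0.ne' hu₁.ne', nullclineGap_eq hc.ne' hp0.ne' hu₂.ne']
    field_simp
    ring
  have hquad : 1 / c < (u₁ + u₂ - p * u₁ * u₂) / (c * p ^ 2 * u₁ ^ 2 * u₂ ^ 2) := by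
    have hsq : p ^ 2 * u₁ ^ 2 * u₂ ^ 2 < u₁ + u₂ - p * u₁ * u₂ := by
      nlinarith [mul_pos hu₁ (sub_pos.2 hpu₂), mul_pos (mul_pos hp0 hu₁) (sub_pos.2 hpu₁),
        mul_pos hu₂ (sub_pos.2 hu₂1), mul_pos hu₂ hu₂]
    rw [div_lt_div_iff₀ hc (by positivity)]
    nlinarith [mul_lt_mul_of_pos_left hsq hc]
  have hlin : -(1 / c) < r * (1 + a - u₁ - u₂) := by
    have : r * (1 - a) < 1 / c := by rw [lt_div_iff₀ hc]; linarith
    nlinarith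
  have := mul_pos (sub_pos.2 h) (by linarith : 0 < r * (1 + a - u₁ - u₂) +
    (u₁ + u₂ - p * u₁ * u₂) / (c * p ^ 2 * u₁ ^ 2 * u₂ ^ 2))
  linarith

lemma exists_nullclineGap_eq_zero (hr : 0 < r) (hc : 0 < c) (ha : 0 < a) (hp : 1 < p)
    (hpa : p * a < 1) : ∃ u ∈ Ioo a (1 / p), nullclineGap r c p a u = 0 := by
  have hp0 : 0 < p := by linarith
  have hap : a < 1 / p := by rw [lt_div_iff₀ hp0]; linarith
  have hcont : ContinuousOn (nullclineGap r c p a) (Icc a (1 / p)) :=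
    continuousOn_nullclineGap hc.ne' hp0.ne' fun u hu => (ha.trans_le hu.1).ne'
  have hleft : nullclineGap r c p a a < 0 := by
    rw [nullclineGap_eq hc.ne' hp0.ne' ha.ne', sub_self, mul_zero, zero_sub, neg_neg_iff_pos]
    exact div_pos (by linarith) (by positivity)
  have hright : 0 < nullclineGap r c p a (1 / p) := by
    have h1 : 0 < 1 - 1 / p := by rw [sub_pos, div_lt_one hp0]; exact hp
    rw [nullclineGap_eq hc.ne' hp0.ne' (by positivity), mul_one_div_cancel hp0.ne', sub_self,
      zero_div, sub_zero]
    have := sub_pos.2 hap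
    positivity
  exact intermediate_value_Ioo hap.le hcont ⟨hleft, hright⟩

end

theorem stmt_2_general (r c p a : ℝ) (hr : 0 < r) (hc : 0 < c)
    (ha0 : 0 < a) (ha1 : a < 1) (hweak : c < 1 / (r * (1 - a)))
    (hp1 : 1 < p) (hpa : p < 1 / a) :
    ∃ u v : ℝ, 0 < u ∧ 0 < v ∧
      r * (1 - u) * (u - a) = (1 + c * v) * v ∧ p * u * (1 + c * v) = 1 ∧
      a < u ∧ u < 1 / p ∧
      ∀ u' v' : ℝ, 0 < u' → 0 < v' →
        r * (1 - u') * (u' - a) = (1 + c * v') * v' → p * u' * (1 + c * v') = 1 →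
        u' = u ∧ v' = v := by
  have hp0 : 0 < p := by linarith
  have hcr : c * r * (1 - a) < 1 := by
    rw [lt_div_iff₀ (mul_pos hr (sub_pos.2 ha1))] at hweak
    linarith
  obtain ⟨u, ⟨hau, hup⟩, hgap⟩ :=
    exists_nullclineGap_eq_zero hr hc ha0 hp1 (by rwa [lt_div_iff₀ ha0] at hpa)
  have hu : 0 < u := ha0.trans hau
  refine ⟨u, predatorNullcline c p u, hu, predatorNullcline_pos hc hp0 hu hup,
    sub_eq_zero.1 hgap, (predator_eq_iff hc.ne' hp0.ne' hu.ne').2 rfl, hau, hup, ?_⟩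
  intro u' v' hu' hv' hprey hpred
  have hu'p : u' < 1 / p := by
    rw [lt_div_iff₀ hp0]
    nlinarith [mul_pos (mul_pos hp0 hu') (mul_pos hc hv')]
  rw [predator_eq_iff hc.ne' hp0.ne' hu'.ne'] at hpred
  subst hpred
  have huu : u' = u :=
    (nullclineGap_strictMonoOn hr.le hc hp1.le hcr).injOn ⟨hu', hu'p⟩ ⟨hu, hup⟩
      (by rw [hgap]; exact sub_eq_zero.2 hprey)
  exact ⟨huu, huu ▸ rfl⟩

/-- Under weak cooperation `c < 1/(r(1-a))` and `1 < p < 1/a`, the system has a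
unique interior equilibrium `(u*, v*)`, and moreover `a < u* < 1/p`. -/
theorem stmt_2 (r c m p a : ℝ) (hr : 0 < r) (hc : 0 < c) (hm : 0 < m)
    (ha0 : 0 < a) (ha1 : a < 1) (hweak : c < 1 / (r * (1 - a)))
    (hp1 : 1 < p) (hpa : p < 1 / a) :
    ∃ u v : ℝ, 0 < u ∧ 0 < v ∧
      r * (1 - u) * (u - a) = (1 + c * v) * v ∧ p * u * (1 + c * v) = 1 ∧
      a < u ∧ u < 1 / p ∧
      ∀ u' v' : ℝ, 0 < u' → 0 < v' →
        r * (1 - u') * (u' - a) = (1 + c * v') * v' → p * u' * (1 + c * v') = 1 →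
        u' = u ∧ v' = v :=
  stmt_2_general r c p a hr hc ha0 ha1 hweak hp1 hpa
end

section
/- Let r, c, m, p > 0 and 0 < a < 1, and suppose c < 1/(r·(1−a)) (weak cooperation). If p ≤ 1, then the system has no interior equilibrium; that is, there is no pair (u, v) with u > 0 and v > 0 satisfying r·(1−u)·(u−a) = (1+c·v)·v and p·u·(1+c·v) = 1. -/
/-- Under weak cooperation `c < 1/(r(1-a))`, if `p ≤ 1` the system has no interior
equilibrium. -/
theorem stmt_3 (r c m p a : ℝ) (hr : 0 < r) (hc : 0 < c) (hm : 0 < m) (hp : 0 < p)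
    (ha0 : 0 < a) (ha1 : a < 1) (hweak : c < 1 / (r * (1 - a))) (hp1 : p ≤ 1) :
    ¬ ∃ u v : ℝ, 0 < u ∧ 0 < v ∧
      r * (1 - u) * (u - a) = (1 + c * v) * v ∧ p * u * (1 + c * v) = 1 := by
  rintro ⟨u, v, hu, hv, h1, h2⟩
  have hra : 0 < r * (1 - a) := by nlinarith
  have hweak' : c * (r * (1 - a)) < 1 := by
    rw [lt_div_iff₀ hra] at hweak; linarith
  have hw : 1 < 1 + c * v := by nlinarith
  have hrhs : 0 < (1 + c * v) * v := by positivity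
  have hprod : 0 < (1 - u) * (u - a) := by nlinarith
  have hu1 : u < 1 := by nlinarith
  have hua : a < u := by nlinarith
  have huw : 1 ≤ u * (1 + c * v) := by
    nlinarith [mul_pos hu (lt_trans one_pos hw)]
  have h3 : (1 + c * v) * (1 - u) ≤ c * v := by nlinarith
  have h4 : r * (1 - u) * (u - a) ≤ r * (1 - a) * (1 - u) := by nlinarith
  have h5 : r * (1 - a) * ((1 + c * v) * (1 - u)) ≤ r * (1 - a) * (c * v) :=
    mul_le_mul_of_nonneg_left h3 (le_of_lt hra)
  have h6 : (1 + c * v) * (r * (1 - u) * (u - a)) ≤ (1 + c * v) * (r * (1 - a) * (1 - u)) :=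
    mul_le_mul_of_nonneg_left h4 (by linarith)
  nlinarith [mul_pos hc hv, mul_pos (mul_pos hc hv) hv, mul_pos (mul_pos (mul_pos hc hv) (mul_pos hc hv)) hv]
end

section
/- Let r, m > 0, 0 < a < 1 and 1 < p < 1/a. Let 0 < c₁ < c₂ < 1/(r·(1−a)), and for i = 1, 2 let (uᵢ, vᵢ) be the unique interior equilibrium of the system with cooperation parameter cᵢ (i.e., uᵢ, vᵢ > 0, r·(1−uᵢ)·(uᵢ−a) = (1+cᵢ·vᵢ)·vᵢ and p·uᵢ·(1+cᵢ·vᵢ) = 1). Then u₂ < u₁; that is, the prey component u* of the interior equilibrium is strictly decreasing with respect to the cooperation parameter c. -/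
set_option maxHeartbeats 1000000


/-- The prey component `u*` of the interior equilibrium is strictly decreasing
with respect to the cooperation parameter `c`. -/
theorem stmt_4 (r m p a c₁ c₂ u₁ v₁ u₂ v₂ : ℝ)
    (hr : 0 < r) (hm : 0 < m) (ha0 : 0 < a) (ha1 : a < 1)
    (hp1 : 1 < p) (hpa : p < 1 / a)
    (hc1 : 0 < c₁) (hc12 : c₁ < c₂) (hc2 : c₂ < 1 / (r * (1 - a)))
    (hu1 : 0 < u₁) (hv1 : 0 < v₁)
    (he11 : r * (1 - u₁) * (u₁ - a) = (1 + c₁ * v₁) * v₁)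
    (he12 : p * u₁ * (1 + c₁ * v₁) = 1)
    (hu2 : 0 < u₂) (hv2 : 0 < v₂)
    (he21 : r * (1 - u₂) * (u₂ - a) = (1 + c₂ * v₂) * v₂)
    (he22 : p * u₂ * (1 + c₂ * v₂) = 1) :
    u₂ < u₁ := by
  have hc2' : 0 < c₂ := lt_trans hc1 hc12
  -- eliminate v: key identities
  have hk1 : c₁ * (r * p^2 * u₁^2 * (1 - u₁) * (u₁ - a)) = 1 - p * u₁ := by
    linear_combination (c₁*p^2*u₁^2) * he11 + (1 + c₁*p*u₁*v₁) * he12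
  have hk2 : c₂ * (r * p^2 * u₂^2 * (1 - u₂) * (u₂ - a)) = 1 - p * u₂ := by
    linear_combination (c₂*p^2*u₂^2) * he21 + (1 + c₂*p*u₂*v₂) * he22
  -- bounds: p*u < 1
  have hpu1 : p * u₁ < 1 := by
    nlinarith [mul_pos (mul_pos (mul_pos (lt_trans one_pos hp1) hu1) hc1) hv1]
  have hpu2 : p * u₂ < 1 := by
    nlinarith [mul_pos (mul_pos (mul_pos (lt_trans one_pos hp1) hu2) hc2') hv2]
  -- bounds: a < u < 1
  have hprod1 : 0 < (1 - u₁) * (u₁ - a) := by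
    have h := mul_pos (show (0:ℝ) < 1 + c₁ * v₁ by nlinarith [mul_pos hc1 hv1]) hv1
    nlinarith
  have hprod2 : 0 < (1 - u₂) * (u₂ - a) := by
    have h := mul_pos (show (0:ℝ) < 1 + c₂ * v₂ by nlinarith [mul_pos hc2' hv2]) hv2
    nlinarith
  have hau1 : a < u₁ := by
    by_contra h'
    push_neg at h'
    have hnn : 0 ≤ (1 - u₁) * (a - u₁) :=
      mul_nonneg (by linarith) (by linarith)
    have heq : (1 - u₁) * (u₁ - a) = -((1 - u₁) * (a - u₁)) := by ring
    linarith [hprod1, heq ▸ hprod1]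
  have hu1' : u₁ < 1 := by
    by_contra h'
    push_neg at h'
    have hnn : 0 ≤ (u₁ - 1) * (u₁ - a) :=
      mul_nonneg (by linarith) (by linarith)
    have heq : (1 - u₁) * (u₁ - a) = -((u₁ - 1) * (u₁ - a)) := by ring
    linarith [heq ▸ hprod1]
  have hau2 : a < u₂ := by
    by_contra h'
    push_neg at h'
    have hnn : 0 ≤ (1 - u₂) * (a - u₂) :=
      mul_nonneg (by linarith) (by linarith)
    have heq : (1 - u₂) * (u₂ - a) = -((1 - u₂) * (a - u₂)) := by ring
    linarith [heq ▸ hprod2]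
  have hu2' : u₂ < 1 := by
    by_contra h'
    push_neg at h'
    have hnn : 0 ≤ (u₂ - 1) * (u₂ - a) :=
      mul_nonneg (by linarith) (by linarith)
    have heq : (1 - u₂) * (u₂ - a) = -((u₂ - 1) * (u₂ - a)) := by ring
    linarith [heq ▸ hprod2]
  -- main argument
  by_contra h
  push_neg at h  -- u₁ ≤ u₂
  have hA : (1 - p * u₂) * (1 - u₁) ≤ (1 - p * u₁) * (1 - u₂) := by nlinarith
  have hB : u₁^2 * (u₁ - a) ≤ u₂^2 * (u₂ - a) := by
    have hf : 0 ≤ u₂^2 + u₁*u₂ + u₁^2 - a*(u₂+u₁) := by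
      nlinarith [mul_pos hu1 hu2, mul_pos hu1 (show 0 < u₁ - a by linarith),
        mul_pos hu2 (show 0 < u₂ - a by linarith)]
    have hnn := mul_nonneg (show (0:ℝ) ≤ u₂ - u₁ by linarith) hf
    nlinarith [hnn]
  have hAnn : 0 ≤ (1 - p * u₂) * (1 - u₁) := by nlinarith
  have hBnn : 0 ≤ u₁^2 * (u₁ - a) := by nlinarith
  have hAB : (1 - p * u₂) * (1 - u₁) * (u₁^2 * (u₁ - a))
      ≤ (1 - p * u₁) * (1 - u₂) * (u₂^2 * (u₂ - a)) :=
    mul_le_mul hA hB hBnn (by nlinarith)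
  have hK1 : 0 < r * p^2 * u₁^2 * (1 - u₁) * (u₁ - a) := by
    have : 0 < u₁ - a := by linarith
    have : 0 < 1 - u₁ := by linarith
    positivity
  have hK2 : 0 < r * p^2 * u₂^2 * (1 - u₂) * (u₂ - a) := by
    have : 0 < u₂ - a := by linarith
    have : 0 < 1 - u₂ := by linarith
    positivity
  have hrp : (0:ℝ) < r * p^2 := by positivity
  have h1 : c₂ * ((r * p^2 * u₂^2 * (1 - u₂) * (u₂ - a)) * (r * p^2 * u₁^2 * (1 - u₁) * (u₁ - a)))
      ≤ c₁ * ((r * p^2 * u₂^2 * (1 - u₂) * (u₂ - a)) * (r * p^2 * u₁^2 * (1 - u₁) * (u₁ - a))) := by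
    have h2 := mul_le_mul_of_nonneg_left hAB (le_of_lt hrp)
    nlinarith [hk1, hk2, h2]
  have hc21 : c₂ ≤ c₁ :=
    le_of_mul_le_mul_right h1 (mul_pos hK2 hK1)
  linarith
end

section
/- Let r, c, m, p > 0 and 0 < a < 1 with c < 1/(r·(1−a)) and 1 < p < 1/a, and let (u*, v*) be the unique interior equilibrium. Then r·c·u*·(1+a−2u*) + (1+c·v*)·(1+2c·v*) > 0, and consequently the determinant of the Jacobian matrix of the system at (u*, v*), which equals m·p·u*·v*·[r·c·u*·(1+a−2u*) + (1+c·v*)·(1+2c·v*)], is strictly positive. -/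
/-- At the unique interior equilibrium under weak cooperation, the bracket
`rcu*(1+a-2u*) + (1+cv*)(1+2cv*)` is positive, hence the determinant of the
Jacobian at the equilibrium is positive. -/
theorem stmt_7 (r c m p a u v : ℝ) (hr : 0 < r) (hc : 0 < c) (hm : 0 < m)
    (ha0 : 0 < a) (ha1 : a < 1) (hweak : c < 1 / (r * (1 - a)))
    (hp1 : 1 < p) (hpa : p < 1 / a)
    (hu : 0 < u) (hv : 0 < v)
    (he1 : r * (1 - u) * (u - a) = (1 + c * v) * v)
    (he2 : p * u * (1 + c * v) = 1) :
    0 < r * c * u * (1 + a - 2 * u) + (1 + c * v) * (1 + 2 * c * v) ∧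
    Matrix.det !![r * u * (1 + a - 2 * u), -2 * c * u * v - u;
                  m * p * v * (1 + c * v), m * p * c * u * v]
      = m * p * u * v * (r * c * u * (1 + a - 2 * u) + (1 + c * v) * (1 + 2 * c * v)) ∧
    0 < Matrix.det !![r * u * (1 + a - 2 * u), -2 * c * u * v - u;
                      m * p * v * (1 + c * v), m * p * c * u * v] := by
  have hra : 0 < r * (1 - a) := by nlinarith
  have hcr : c * (r * (1 - a)) < 1 := by
    have := (lt_div_iff₀ hra).mp hweak
    linarith
  have hpos : 0 < (1 + c * v) * v := by positivity
  have hfac : 0 < (1 - u) * (u - a) := by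
    have : 0 < r * ((1 - u) * (u - a)) := by nlinarith [he1]
    nlinarith
  have hu1 : u < 1 := by nlinarith
  have hua : a < u := by nlinarith
  have hbracket : 0 < r * c * u * (1 + a - 2 * u) + (1 + c * v) * (1 + 2 * c * v) := by
    nlinarith [mul_pos hc hv, sq_nonneg (c*v), mul_pos (mul_pos hr hc) hu,
      mul_pos hu (sub_pos.mpr hu1), mul_pos (mul_pos hr hc) (mul_pos hu (sub_pos.mpr hu1))]
  have hdet : Matrix.det !![r * u * (1 + a - 2 * u), -2 * c * u * v - u;
                  m * p * v * (1 + c * v), m * p * c * u * v]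
      = m * p * u * v * (r * c * u * (1 + a - 2 * u) + (1 + c * v) * (1 + 2 * c * v)) := by
    simp [Matrix.det_fin_two_of]; ring
  refine ⟨hbracket, hdet, ?_⟩
  rw [hdet]
  have : 0 < m * p * u * v := by positivity
  exact mul_pos this hbracket
end

section
/- Let r, c, m > 0 and 0 < a < 1 with c < 1/(r·(1−a)). For p ∈ (1, 1/a) let (u*(p), v*(p)) denote the unique interior equilibrium, and define T(p) = −r·u*(p)·(2u*(p)−a−1) + m·(1−p·u*(p)) (the trace of the Jacobian at the equilibrium). Then there exists a unique p_H ∈ (1, 2/(a+1)) such that T(p) < 0 for all p ∈ (1, p_H), T(p_H) = 0, and T(p) > 0 for all p ∈ (p_H, 1/a). Consequently, for 1 < p < p_H both eigenvalues of the Jacobian at the interior equilibrium have negative real part (so the equilibrium is locally asymptotically stable), and for p_H < p < 1/a the Jacobian has an eigenvalue with positive real part (so the equilibrium is unstable). -/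
/-- Trace of the Jacobian at the interior equilibrium, as a function of `p`. -/
noncomputable def traceJ (r m a : ℝ) (ustar : ℝ → ℝ) (p : ℝ) : ℝ :=
  -r * ustar p * (2 * ustar p - a - 1) + m * (1 - p * ustar p)

/-- Determinant of the Jacobian at the interior equilibrium, as a function of `p`. -/
noncomputable def detJ (r c m a : ℝ) (ustar vstar : ℝ → ℝ) (p : ℝ) : ℝ :=
  m * p * ustar p * vstar p *
    (r * c * ustar p * (1 + a - 2 * ustar p) + (1 + c * vstar p) * (1 + 2 * c * vstar p))


noncomputable def auxW (r c a : ℝ) (u : ℝ) : ℝ :=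
  (1 + Real.sqrt (1 + 4 * (r * c * (1 - u) * (u - a)))) / 2

noncomputable def auxS (r c m a : ℝ) (u : ℝ) : ℝ :=
  -r * u * (2 * u - a - 1) + m * (1 - 1 / auxW r c a u)

lemma auxW_pos (r c a u : ℝ) : 0 < auxW r c a u := by
  have := Real.sqrt_nonneg (1 + 4 * (r * c * (1 - u) * (u - a)))
  unfold auxW; linarith

lemma auxW_spec (r c a u : ℝ) (h : 0 ≤ 1 + 4 * (r * c * (1 - u) * (u - a))) :
    auxW r c a u ^ 2 - auxW r c a u = r * c * (1 - u) * (u - a) := by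
  have hs : Real.sqrt (1 + 4 * (r * c * (1 - u) * (u - a))) ^ 2
      = 1 + 4 * (r * c * (1 - u) * (u - a)) := Real.sq_sqrt h
  unfold auxW
  linear_combination hs / 4

lemma auxW_eq (r c a u x : ℝ) (hx : 1 / 2 < x)
    (hxsq : x ^ 2 - x = r * c * (1 - u) * (u - a)) : auxW r c a u = x := by
  have h1 : 1 + 4 * (r * c * (1 - u) * (u - a)) = (2 * x - 1) ^ 2 := by
    linear_combination -4 * hxsq
  unfold auxW
  rw [h1, Real.sqrt_sq (by linarith)]
  ring

lemma auxW_mono (r c a u₁ u₂ : ℝ)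
    (h : r * c * (1 - u₂) * (u₂ - a) ≤ r * c * (1 - u₁) * (u₁ - a)) :
    auxW r c a u₂ ≤ auxW r c a u₁ := by
  have := Real.sqrt_le_sqrt (by linarith :
    1 + 4 * (r * c * (1 - u₂) * (u₂ - a)) ≤ 1 + 4 * (r * c * (1 - u₁) * (u₁ - a)))
  unfold auxW; linarith

lemma auxW_cont (r c a : ℝ) : Continuous (auxW r c a) := by
  unfold auxW
  fun_prop

lemma auxS_cont (r c m a : ℝ) : Continuous (auxS r c m a) := by
  have hW : Continuous (auxW r c a) := auxW_cont r c a
  have h1 : Continuous fun u => 1 / auxW r c a u :=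
    continuous_const.div hW fun u => (auxW_pos r c a u).ne'
  unfold auxS
  exact ((continuous_const.mul continuous_id).mul (by fun_prop)).add
    (continuous_const.mul (continuous_const.sub h1))

lemma auxLu (r c a : ℝ) (hr : 0 < r) (hc : 0 < c) (ha0 : 0 < a)
    (hrc : r * c * (1 - a) < 1) :
    ∀ p u₁ u₂ : ℝ, a ≤ u₁ → u₁ < u₂ → u₂ ≤ 1 → 1 ≤ p → p * u₂ < 1 →
      r * c * (1 - u₁) * (u₁ - a) - (1 / (p * u₁)) ^ 2 + 1 / (p * u₁)
        < r * c * (1 - u₂) * (u₂ - a) - (1 / (p * u₂)) ^ 2 + 1 / (p * u₂) := by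
  intro p u₁ u₂ h1 h12 h2 hp hpu2
  have hu₁0 : 0 < u₁ := lt_of_lt_of_le ha0 h1
  have hu₂0 : 0 < u₂ := lt_trans hu₁0 h12
  have hp0 : 0 < p := by linarith
  have hpu₁0 : 0 < p * u₁ := mul_pos hp0 hu₁0
  have hpu₂0 : 0 < p * u₂ := mul_pos hp0 hu₂0
  set w₁ := 1 / (p * u₁) with hw₁
  set w₂ := 1 / (p * u₂) with hw₂
  have hw₂1 : 1 < w₂ := (one_lt_div hpu₂0).mpr hpu2
  have hw₁₂ : w₂ < w₁ :=
    one_div_lt_one_div_of_lt hpu₁0 (by nlinarith)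
  have key1 : w₁ - w₂ = (u₂ - u₁) / (p * u₁ * u₂) := by
    rw [hw₁, hw₂]; field_simp
  have hden : p * u₁ * u₂ < 1 := by nlinarith
  have hden0 : 0 < p * u₁ * u₂ := by positivity
  have hgap : u₂ - u₁ < w₁ - w₂ := by
    rw [key1, lt_div_iff₀ hden0]
    nlinarith
  have hgbound : r * c * (1 - u₁) * (u₁ - a) - r * c * (1 - u₂) * (u₂ - a)
      ≤ r * c * (1 - a) * (u₂ - u₁) := by
    nlinarith [mul_nonneg (mul_nonneg (mul_pos hr hc).le
      (by linarith : (0:ℝ) ≤ u₂ - u₁)) (by linarith : (0:ℝ) ≤ 2 - u₁ - u₂)]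
  have hwbound : u₂ - u₁ < (w₁ ^ 2 - w₁) - (w₂ ^ 2 - w₂) := by
    nlinarith [mul_nonneg (by linarith : (0:ℝ) ≤ w₁ - w₂)
      (by linarith : (0:ℝ) ≤ w₁ + w₂ - 2)]
  nlinarith [mul_pos (show (0:ℝ) < u₂ - u₁ by linarith)
    (show (0:ℝ) < 1 - r * c * (1 - a) by linarith)]

lemma auxLp (r c a : ℝ) :
    ∀ u p₁ p₂ : ℝ, 0 < u → 1 ≤ p₁ → p₁ < p₂ → p₂ * u < 1 →
      r * c * (1 - u) * (u - a) - (1 / (p₁ * u)) ^ 2 + 1 / (p₁ * u)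
        < r * c * (1 - u) * (u - a) - (1 / (p₂ * u)) ^ 2 + 1 / (p₂ * u) := by
  intro u p₁ p₂ hu0 hp1 hp12 hp2u
  have hp₁0 : 0 < p₁ := by linarith
  have hpu₁0 : 0 < p₁ * u := mul_pos hp₁0 hu0
  have hpu₂0 : 0 < p₂ * u := mul_pos (by linarith) hu0
  set w₁ := 1 / (p₁ * u) with hw₁
  set w₂ := 1 / (p₂ * u) with hw₂
  have hw₂1 : 1 < w₂ := (one_lt_div hpu₂0).mpr hp2u
  have hw₁₂ : w₂ < w₁ :=
    one_div_lt_one_div_of_lt hpu₁0 (by nlinarith)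
  nlinarith [mul_pos (show (0:ℝ) < w₁ - w₂ by linarith)
    (show (0:ℝ) < w₁ + w₂ - 1 by linarith)]

lemma quad_stable (T D : ℝ) (hT : T < 0) (hD : 0 < D) (lam : ℂ)
    (h : lam ^ 2 - (T : ℂ) * lam + (D : ℂ) = 0) : lam.re < 0 := by
  have hre := congrArg Complex.re h
  have him := congrArg Complex.im h
  simp [pow_two, Complex.mul_re, Complex.mul_im, Complex.add_re, Complex.add_im,
    Complex.sub_re, Complex.sub_im, Complex.ofReal_re, Complex.ofReal_im] at hre him
  rcases eq_or_ne lam.im 0 with hb | hb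
  · rw [hb] at hre
    simp at hre
    nlinarith [sq_nonneg lam.re, hre]
  · have hfac : lam.im * (2 * lam.re - T) = 0 := by linear_combination him
    rcases mul_eq_zero.mp hfac with h' | h'
    · exact absurd h' hb
    · linarith

lemma quad_unstable (T D : ℝ) (hT : 0 < T) (hD : 0 < D) :
    ∃ lam : ℂ, lam ^ 2 - (T : ℂ) * lam + (D : ℂ) = 0 ∧ 0 < lam.re := by
  rcases le_or_gt (4 * D) (T ^ 2) with hdisc | hdisc
  · refine ⟨(((T + Real.sqrt (T ^ 2 - 4 * D)) / 2 : ℝ) : ℂ), ?_, ?_⟩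
    · have hs : Real.sqrt (T ^ 2 - 4 * D) ^ 2 = T ^ 2 - 4 * D :=
        Real.sq_sqrt (by linarith)
      have hxr : ((T + Real.sqrt (T ^ 2 - 4 * D)) / 2) ^ 2
          - T * ((T + Real.sqrt (T ^ 2 - 4 * D)) / 2) + D = 0 := by
        linear_combination hs / 4
      exact_mod_cast congrArg (fun t : ℝ => (t : ℂ)) hxr
    · simp only [Complex.ofReal_re]
      have := Real.sqrt_nonneg (T ^ 2 - 4 * D)
      linarith
  · refine ⟨(T / 2 : ℝ) + ((Real.sqrt (4 * D - T ^ 2) / 2 : ℝ) : ℂ) * Complex.I, ?_, ?_⟩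
    · have hs : Real.sqrt (4 * D - T ^ 2) ^ 2 = 4 * D - T ^ 2 :=
        Real.sq_sqrt (by linarith)
      have hsC : ((Real.sqrt (4 * D - T ^ 2) : ℂ)) ^ 2 = 4 * (D : ℂ) - (T : ℂ) ^ 2 := by
        exact_mod_cast congrArg (fun t : ℝ => (t : ℂ)) hs
      push_cast
      linear_combination (-(1:ℂ)/4) * hsC
        + (((Real.sqrt (4 * D - T ^ 2) : ℂ)) ^ 2 / 4) * Complex.I_sq
    · simp [Complex.add_re, Complex.ofReal_re, Complex.mul_re, Complex.I_re, Complex.I_im,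
        Complex.ofReal_im]
      linarith


set_option maxHeartbeats 4000000 in
/-- Existence of a unique Hopf threshold `p_H ∈ (1, 2/(a+1))` under weak cooperation:
the trace is negative before `p_H`, zero at `p_H`, positive after; accordingly the
interior equilibrium is locally asymptotically stable for `1 < p < p_H` and unstable
for `p_H < p < 1/a`. -/
theorem stmt_9 (r c m a : ℝ) (hr : 0 < r) (hc : 0 < c) (hm : 0 < m)
    (ha0 : 0 < a) (ha1 : a < 1) (hweak : c < 1 / (r * (1 - a)))
    (ustar vstar : ℝ → ℝ)
    (heq : ∀ p : ℝ, 1 < p → p < 1 / a →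
      0 < ustar p ∧ 0 < vstar p ∧
      r * (1 - ustar p) * (ustar p - a) = (1 + c * vstar p) * vstar p ∧
      p * ustar p * (1 + c * vstar p) = 1) :
    ∃ pH : ℝ, 1 < pH ∧ pH < 2 / (a + 1) ∧
      (∀ p : ℝ, 1 < p → p < pH → traceJ r m a ustar p < 0) ∧
      traceJ r m a ustar pH = 0 ∧
      (∀ p : ℝ, pH < p → p < 1 / a → 0 < traceJ r m a ustar p) ∧
      (∀ pH' : ℝ, 1 < pH' → pH' < 2 / (a + 1) →
        (∀ p : ℝ, 1 < p → p < pH' → traceJ r m a ustar p < 0) →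
        traceJ r m a ustar pH' = 0 →
        (∀ p : ℝ, pH' < p → p < 1 / a → 0 < traceJ r m a ustar p) →
        pH' = pH) ∧
      (∀ p : ℝ, 1 < p → p < pH → ∀ lam : ℂ,
        lam ^ 2 - (traceJ r m a ustar p : ℂ) * lam + (detJ r c m a ustar vstar p : ℂ) = 0 →
        lam.re < 0) ∧
      (∀ p : ℝ, pH < p → p < 1 / a → ∃ lam : ℂ,
        lam ^ 2 - (traceJ r m a ustar p : ℂ) * lam + (detJ r c m a ustar vstar p : ℂ) = 0 ∧
        0 < lam.re) := by
  have ha1' : (0:ℝ) < 1 - a := by linarith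
  have hrc : r * c * (1 - a) < 1 := by
    have h1 : 0 < r * (1 - a) := by positivity
    have h2 := (lt_div_iff₀ h1).mp hweak
    nlinarith
  have h2a1a : 2 / (a + 1) < 1 / a := by
    rw [div_lt_div_iff₀ (by linarith) ha0]; linarith
  -- W > 1 on (a,1)
  have Wgt1 : ∀ u, a < u → u < 1 → 1 < auxW r c a u := by
    intro u hau hu1
    have hg : 0 < r * c * (1 - u) * (u - a) :=
      mul_pos (mul_pos (mul_pos hr hc) (by linarith)) (by linarith)
    have spec := auxW_spec r c a u (by linarith)
    have hW0 := auxW_pos r c a u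
    nlinarith
  -- u * W u < 1 on (a,1)
  have hprod : ∀ u, a < u → u < 1 → u * auxW r c a u < 1 := by
    intro u hau hu1
    have hu0 : 0 < u := lt_trans ha0 hau
    have hW := Wgt1 u hau hu1
    have hg : 0 < r * c * (1 - u) * (u - a) :=
      mul_pos (mul_pos (mul_pos hr hc) (by linarith)) (by linarith)
    have spec := auxW_spec r c a u (by linarith)
    have h1u : 1 < 1 / u := (one_lt_div hu0).mpr hu1
    have hkey : auxW r c a u ^ 2 - auxW r c a u < (1 / u) ^ 2 - 1 / u := by
      rw [spec]
      have e : (1 / u) ^ 2 - 1 / u = (1 - u) / u ^ 2 := by field_simp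
      rw [e, lt_div_iff₀ (by positivity)]
      have hrcu : r * c * (u - a) < 1 := by nlinarith [mul_pos hr hc]
      have hb2 : r * c * (1 - u) * (u - a) < 1 - u := by
        nlinarith [mul_pos (show (0:ℝ) < 1 - u by linarith)
          (show (0:ℝ) < 1 - r * c * (u - a) by linarith)]
      nlinarith [mul_nonneg (le_of_lt hg) (show (0:ℝ) ≤ 1 - u ^ 2 by nlinarith)]
    by_contra hcon
    push_neg at hcon
    have h1uW : 1 / u ≤ auxW r c a u := by
      rw [div_le_iff₀ hu0]; linarith [mul_comm u (auxW r c a u)]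
    nlinarith [mul_nonneg (by linarith : (0:ℝ) ≤ auxW r c a u - 1 / u)
      (by linarith : (0:ℝ) ≤ auxW r c a u + 1 / u - 1)]
  -- equilibrium properties
  have key : ∀ p : ℝ, 1 < p → p < 1 / a →
      a < ustar p ∧ ustar p < 1 ∧ p * ustar p < 1 ∧
      p * ustar p * auxW r c a (ustar p) = 1 ∧
      traceJ r m a ustar p = auxS r c m a (ustar p) := by
    intro p hp1 hp2
    obtain ⟨hu0, hv0, e1, e2⟩ := heq p hp1 hp2
    have hp0 : (0:ℝ) < p := by linarith
    have hx1 : 1 < 1 + c * vstar p := by nlinarith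
    have hpu0 : 0 < p * ustar p := mul_pos hp0 hu0
    have hpu1 : p * ustar p < 1 := by nlinarith [mul_pos hpu0 (mul_pos hc hv0)]
    have hu1 : ustar p < 1 := by nlinarith
    have hua : a < ustar p := by
      have h1 : 0 < (1 + c * vstar p) * vstar p := mul_pos (by linarith) hv0
      nlinarith [mul_pos hr (show (0:ℝ) < 1 - ustar p by linarith)]
    have hxsq : (1 + c * vstar p) ^ 2 - (1 + c * vstar p)
        = r * c * (1 - ustar p) * (ustar p - a) := by
      linear_combination (-c) * e1
    have hWx : auxW r c a (ustar p) = 1 + c * vstar p :=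
      auxW_eq r c a _ _ (by linarith) hxsq
    have hE : p * ustar p * auxW r c a (ustar p) = 1 := by rw [hWx]; exact e2
    have hWpos := auxW_pos r c a (ustar p)
    have hpuW : p * ustar p = 1 / auxW r c a (ustar p) := by
      rw [eq_div_iff hWpos.ne']; exact hE
    refine ⟨hua, hu1, hpu1, hE, ?_⟩
    unfold traceJ auxS
    rw [hpuW]
  -- S at endpoints
  have hW1eq : auxW r c a 1 = 1 := by
    unfold auxW
    rw [show 1 + 4 * (r * c * (1 - 1) * (1 - a)) = 1 by ring, Real.sqrt_one]
    norm_num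
  have hS1 : auxS r c m a 1 < 0 := by
    unfold auxS
    rw [hW1eq]
    have := mul_pos hr ha1'
    norm_num
    nlinarith
  have hShalf : 0 < auxS r c m a ((a + 1) / 2) := by
    have hau : a < (a + 1) / 2 := by linarith
    have hu1 : (a + 1) / 2 < 1 := by linarith
    have hW := Wgt1 _ hau hu1
    have hW0 := auxW_pos r c a ((a + 1) / 2)
    have hdiv : 1 / auxW r c a ((a + 1) / 2) < 1 := by
      rw [div_lt_one hW0]; exact hW
    unfold auxS
    have h0 : -r * ((a + 1) / 2) * (2 * ((a + 1) / 2) - a - 1) = 0 := by ring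
    rw [h0]
    have := mul_pos hm (show (0:ℝ) < 1 - 1 / auxW r c a ((a + 1) / 2) by linarith)
    linarith
  -- IVT
  obtain ⟨uH, huHmem, huHS⟩ :
      ∃ uH ∈ Set.Ioo ((a + 1) / 2) 1, auxS r c m a uH = 0 := by
    have hsub := intermediate_value_Ioo' (by linarith : (a + 1) / 2 ≤ (1:ℝ))
      (auxS_cont r c m a).continuousOn
    have h0 : (0:ℝ) ∈ Set.Ioo (auxS r c m a 1) (auxS r c m a ((a + 1) / 2)) :=
      ⟨hS1, hShalf⟩
    obtain ⟨uH, hmem, hval⟩ := hsub h0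
    exact ⟨uH, hmem, hval⟩
  obtain ⟨huHl, huHr⟩ := huHmem
  have huHa : a < uH := by linarith
  have huH0 : 0 < uH := lt_trans ha0 huHa
  -- strict decrease of S on [(a+1)/2, 1]
  have Sdec : ∀ u₁ u₂, (a + 1) / 2 ≤ u₁ → u₁ < u₂ → u₂ ≤ 1 →
      auxS r c m a u₂ < auxS r c m a u₁ := by
    intro u₁ u₂ h1 h12 h2
    have hg : r * c * (1 - u₂) * (u₂ - a) ≤ r * c * (1 - u₁) * (u₁ - a) := by
      nlinarith [mul_nonneg (mul_nonneg (mul_pos hr hc).le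
        (by linarith : (0:ℝ) ≤ u₂ - u₁)) (by linarith : (0:ℝ) ≤ u₁ + u₂ - 1 - a)]
    have hWle := auxW_mono r c a u₁ u₂ hg
    have hW2 : 0 < auxW r c a u₂ := auxW_pos r c a u₂
    have hW1 : 0 < auxW r c a u₁ := auxW_pos r c a u₁
    have hdiv : 1 / auxW r c a u₁ ≤ 1 / auxW r c a u₂ :=
      one_div_le_one_div_of_le hW2 hWle
    have hpoly : -r * u₂ * (2 * u₂ - a - 1) < -r * u₁ * (2 * u₁ - a - 1) := by
      nlinarith [mul_pos hr (mul_pos (show (0:ℝ) < u₂ - u₁ by linarith)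
        (show (0:ℝ) < 2 * (u₁ + u₂) - a - 1 by linarith))]
    unfold auxS
    nlinarith [mul_le_mul_of_nonneg_left
      (show 1 - 1 / auxW r c a u₂ ≤ 1 - 1 / auxW r c a u₁ by linarith) hm.le]
  -- sign of S on (a,1)
  have Spos : ∀ u, a < u → u < uH → 0 < auxS r c m a u := by
    intro u hau huuH
    rcases le_or_gt u ((a + 1) / 2) with hle | hlt
    · have hu1 : u < 1 := by linarith
      have hW := Wgt1 u hau hu1
      have hW0 := auxW_pos r c a u
      have hdiv : 1 / auxW r c a u < 1 := by rw [div_lt_one hW0]; exact hW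
      have h1 : 0 ≤ -r * u * (2 * u - a - 1) := by
        nlinarith [mul_nonneg (mul_pos hr (lt_trans ha0 hau)).le
          (show (0:ℝ) ≤ a + 1 - 2 * u by linarith)]
      have := mul_pos hm (show (0:ℝ) < 1 - 1 / auxW r c a u by linarith)
      unfold auxS
      linarith
    · have := Sdec u uH hlt.le huuH huHr.le
      linarith [huHS]
  have Sneg : ∀ u, uH < u → u ≤ 1 → auxS r c m a u < 0 := by
    intro u huHu hu1
    have := Sdec uH u huHl.le huHu hu1
    linarith [huHS]
  -- define pH
  have huHprod : uH * auxW r c a uH < 1 := hprod uH huHa huHr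
  have hWuH : 1 < auxW r c a uH := Wgt1 uH huHa huHr
  have hWuH0 : 0 < auxW r c a uH := auxW_pos r c a uH
  have hden0 : 0 < uH * auxW r c a uH := mul_pos huH0 hWuH0
  set pH : ℝ := 1 / (uH * auxW r c a uH) with hpHdef
  have hpH1 : 1 < pH := (one_lt_div hden0).mpr huHprod
  have hpHE : pH * uH * auxW r c a uH = 1 := by
    rw [hpHdef]; field_simp
  have hpHuH : pH * uH < 1 := by
    nlinarith [hpHE, mul_pos (mul_pos (lt_trans one_pos hpH1) huH0)
      (show (0:ℝ) < auxW r c a uH - 1 by linarith)]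
  have hpH2 : pH < 2 / (a + 1) := by
    have h1 : pH < 1 / uH := by
      rw [hpHdef]
      apply one_div_lt_one_div_of_lt huH0
      nlinarith
    have h2 : 1 / uH < 2 / (a + 1) := by
      rw [div_lt_div_iff₀ huH0 (by linarith)]; linarith
    linarith
  have hpH1a : pH < 1 / a := lt_trans hpH2 h2a1a
  -- F = 0 at equilibrium points
  have FeqAt : ∀ u p, a < u → u < 1 → 0 < p → p * u * auxW r c a u = 1 →
      r * c * (1 - u) * (u - a) - (1 / (p * u)) ^ 2 + 1 / (p * u) = 0 := by
    intro u p hau hu1 hp0 hE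
    have hu0 : 0 < u := lt_trans ha0 hau
    have hg : 0 < r * c * (1 - u) * (u - a) :=
      mul_pos (mul_pos (mul_pos hr hc) (by linarith)) (by linarith)
    have hW0 := auxW_pos r c a u
    have h1 : 1 / (p * u) = auxW r c a u := by
      rw [div_eq_iff (by positivity : (p * u) ≠ 0)]
      nlinarith [hE]
    rw [h1]
    have spec := auxW_spec r c a u (by linarith)
    linarith
  have hFH := FeqAt uH pH huHa huHr (by linarith) hpHE
  -- trace negative before pH
  have hneg : ∀ p, 1 < p → p < pH → traceJ r m a ustar p < 0 := by
    intro p hp1 hppH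
    have hp1a : p < 1 / a := by linarith
    obtain ⟨hua, hu1, hpu1, hE, hT⟩ := key p hp1 hp1a
    have hp0 : (0:ℝ) < p := by linarith
    have hF := FeqAt (ustar p) p hua hu1 hp0 hE
    have hpuH : p * uH < 1 := by
      nlinarith [mul_pos (show (0:ℝ) < pH - p by linarith) huH0]
    have huHu : uH < ustar p := by
      by_contra hcon
      push_neg at hcon
      rcases eq_or_lt_of_le hcon with hceq | hclt
      · have h2 := auxLp r c a (ustar p) p pH (lt_trans ha0 hua) hp1.le hppH
          (by rw [hceq]; exact hpHuH)
        rw [hceq] at hF h2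
        linarith [hFH]
      · have h1 := auxLu r c a hr hc ha0 hrc p (ustar p) uH hua.le hclt huHr.le
          hp1.le hpuH
        have h2 := auxLp r c a uH p pH huH0 hp1.le hppH hpHuH
        linarith [hF, hFH]
    rw [hT]
    exact Sneg (ustar p) huHu hu1.le
  -- trace zero at pH
  have hzero : traceJ r m a ustar pH = 0 := by
    obtain ⟨hua, hu1, hpu1, hE, hT⟩ := key pH hpH1 hpH1a
    have hF := FeqAt (ustar pH) pH hua hu1 (by linarith) hE
    have huu : ustar pH = uH := by
      rcases lt_trichotomy (ustar pH) uH with h | h | h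
      · exfalso
        have h1 := auxLu r c a hr hc ha0 hrc pH (ustar pH) uH hua.le h huHr.le
          hpH1.le hpHuH
        linarith [hF, hFH]
      · exact h
      · exfalso
        have h1 := auxLu r c a hr hc ha0 hrc pH uH (ustar pH) huHa.le h hu1.le
          hpH1.le hpu1
        linarith [hF, hFH]
    rw [hT, huu, huHS]
  -- trace positive after pH
  have hpos : ∀ p, pH < p → p < 1 / a → 0 < traceJ r m a ustar p := by
    intro p hpHp hp1a
    have hp1 : 1 < p := lt_trans hpH1 hpHp
    obtain ⟨hua, hu1, hpu1, hE, hT⟩ := key p hp1 hp1a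
    have hF := FeqAt (ustar p) p hua hu1 (by linarith) hE
    have huu : ustar p < uH := by
      by_contra hcon
      push_neg at hcon
      have h2 := auxLp r c a (ustar p) pH p (lt_trans ha0 hua) hpH1.le hpHp hpu1
      rcases eq_or_lt_of_le hcon with hceq | hclt
      · rw [hceq] at hFH
        linarith [hF]
      · have hpHu : pH * ustar p < 1 := by
          nlinarith [mul_pos (show (0:ℝ) < p - pH by linarith) (lt_trans ha0 hua)]
        have h1 := auxLu r c a hr hc ha0 hrc pH uH (ustar p) huHa.le hclt hu1.le
          hpH1.le hpHu
        linarith [hF, hFH]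
    rw [hT]
    exact Spos (ustar p) hua huu
  -- determinant positive
  have hdet : ∀ p, 1 < p → p < 1 / a → 0 < detJ r c m a ustar vstar p := by
    intro p hp1 hp2
    obtain ⟨hu0, hv0, e1, e2⟩ := heq p hp1 hp2
    obtain ⟨hua, hu1, hpu1, hE, hT⟩ := key p hp1 hp2
    have hp0 : (0:ℝ) < p := by linarith
    have hx1 : 1 < 1 + c * vstar p := by nlinarith
    have hB : 0 < r * c * ustar p * (1 + a - 2 * ustar p)
        + (1 + c * vstar p) * (1 + 2 * c * vstar p) := by
      nlinarith [mul_pos (show (0:ℝ) < (1 + c * vstar p) - 1 by linarith)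
          (show (0:ℝ) < 2 * (1 + c * vstar p) + 1 by linarith),
        mul_nonneg (mul_nonneg (mul_pos hr hc).le
          (show (0:ℝ) ≤ 1 - ustar p by linarith))
          (show (0:ℝ) ≤ 2 * ustar p + 1 - a by linarith), hrc]
    have hfin := mul_pos (mul_pos (mul_pos (mul_pos hm hp0) hu0) hv0) hB
    unfold detJ
    exact hfin
  -- uniqueness
  have huniq : ∀ pH', 1 < pH' → pH' < 2 / (a + 1) →
      (∀ p : ℝ, 1 < p → p < pH' → traceJ r m a ustar p < 0) →
      traceJ r m a ustar pH' = 0 →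
      (∀ p : ℝ, pH' < p → p < 1 / a → 0 < traceJ r m a ustar p) →
      pH' = pH := by
    intro pH' h1' h2' _ hz' _
    have h1a' : pH' < 1 / a := lt_trans h2' h2a1a
    obtain ⟨hua, hu1, hpu1, hE, hT⟩ := key pH' h1' h1a'
    have hS0 : auxS r c m a (ustar pH') = 0 := by rw [← hT]; exact hz'
    have huu : ustar pH' = uH := by
      rcases lt_trichotomy (ustar pH') uH with h | h | h
      · have := Spos (ustar pH') hua h; linarith
      · exact h
      · have := Sneg (ustar pH') h hu1.le; linarith
    have hE' : pH' * uH * auxW r c a uH = 1 := by rw [← huu]; exact hE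
    have hF' := FeqAt uH pH' huHa huHr (by linarith) hE'
    rcases lt_trichotomy pH' pH with h | h | h
    · exfalso
      have := auxLp r c a uH pH' pH huH0 h1'.le h hpHuH
      linarith [hFH]
    · exact h
    · exfalso
      have := auxLp r c a uH pH pH' huH0 hpH1.le h (by rw [← huu]; exact hpu1)
      linarith [hFH]
  -- eigenvalue statements
  have hstable : ∀ p : ℝ, 1 < p → p < pH → ∀ lam : ℂ,
      lam ^ 2 - (traceJ r m a ustar p : ℂ) * lam + (detJ r c m a ustar vstar p : ℂ) = 0 →
      lam.re < 0 := by
    intro p hp1 hppH lam hlam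
    exact quad_stable _ _ (hneg p hp1 hppH) (hdet p hp1 (by linarith)) lam hlam
  have hunstable : ∀ p : ℝ, pH < p → p < 1 / a → ∃ lam : ℂ,
      lam ^ 2 - (traceJ r m a ustar p : ℂ) * lam + (detJ r c m a ustar vstar p : ℂ) = 0 ∧
      0 < lam.re := by
    intro p hpHp hp1a
    exact quad_unstable _ _ (hpos p hpHp hp1a) (hdet p (lt_trans hpH1 hpHp) hp1a)
  exact ⟨pH, hpH1, hpH2, hneg, hzero, hpos, huniq, hstable, hunstable⟩
end

section
/- Let r, c, m, p > 0 and 0 < a < 1, and let F(u, v) = (r·u·(1−u)·(u−a) − (1+c·v)·u·v, m·v·(p·u·(1+c·v) − 1)) be the vector field of the system. Then: (i) the Jacobian matrix of F at (0,0) is diagonal with eigenvalues −r·a and −m, both negative; (ii) the Jacobian at (a,0) is upper triangular with eigenvalues r·a·(1−a) > 0 and m·(p·a−1), so it has one positive and one negative eigenvalue (saddle) if p < 1/a, and two positive eigenvalues (unstable node) if p > 1/a; (iii) the Jacobian at (1,0) is upper triangular with eigenvalues −r·(1−a) < 0 and m·(p−1), so it has two negative eigenvalues (stable node) if p < 1,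 and one positive and one negative eigenvalue (saddle) if p > 1. -/
/-!
The predator equation carries the factor `v`, so at each boundary equilibrium `(u, 0)` the
Jacobian is upper triangular with diagonal `r (−3u² + 2(1+a)u − a)` and `m (p u − 1)`; these are its
eigenvalues, and their signs follow from `0 < a < 1`.
-/

/-- The vector field of the predator-prey system with cooperative hunting and
Allee effect, on `Fin 2 → ℝ`. -/
noncomputable def vectorField (r c m p a : ℝ) (x : Fin 2 → ℝ) : Fin 2 → ℝ :=
  ![r * x 0 * (1 - x 0) * (x 0 - a) - (1 + c * x 1) * x 0 * x 1,
    m * x 1 * (p * x 0 * (1 + c * x 1) - 1)]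

section

variable (r c m p a : ℝ)

def vectorFieldJacobian (x : Fin 2 → ℝ) : Matrix (Fin 2) (Fin 2) ℝ :=
  !![r * ((1 - x 0) * (x 0 - a) - x 0 * (x 0 - a) + x 0 * (1 - x 0)) - (1 + c * x 1) * x 1,
      -(x 0 * (1 + 2 * c * x 1));
     m * p * x 1 * (1 + c * x 1), m * (p * x 0 * (1 + 2 * c * x 1) - 1)]

theorem hasFDerivAt_vectorField (x : Fin 2 → ℝ) :
    HasFDerivAt (vectorField r c m p a)
      (LinearMap.toContinuousLinearMap (Matrix.toLin' (vectorFieldJacobian r c m p a x))) x := by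
  have hu := hasFDerivAt_apply (𝕜 := ℝ) (0 : Fin 2) x
  have hv := hasFDerivAt_apply (𝕜 := ℝ) (1 : Fin 2) x
  have hconst (k : ℝ) := hasFDerivAt_const (𝕜 := ℝ) k x
  rw [hasFDerivAt_pi']
  intro i
  fin_cases i
  · refine (((((hconst r).mul hu).mul ((hconst 1).sub hu)).mul (hu.sub (hconst a))).sub
      ((((hconst 1).add ((hconst c).mul hv)).mul hu).mul hv)).congr_fderiv ?_
    ext h
    simp [vectorFieldJacobian, dotProduct, Fin.sum_univ_two]
    ring
  · refine (((hconst m).mul hv).mul ((((hconst p).mul hu).mul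
      ((hconst 1).add ((hconst c).mul hv))).sub (hconst 1))).congr_fderiv ?_
    ext h
    simp [vectorFieldJacobian, dotProduct, Fin.sum_univ_two]
    ring

theorem hasFDerivAt_vectorField_boundary (u : ℝ) :
    HasFDerivAt (vectorField r c m p a)
      (LinearMap.toContinuousLinearMap (Matrix.toLin'
        !![r * ((1 - u) * (u - a) - u * (u - a) + u * (1 - u)), -u; 0, m * (p * u - 1)]))
      ![u, 0] := by
  convert hasFDerivAt_vectorField r c m p a ![u, 0] using 3
  ext i j
  fin_cases i <;> fin_cases j <;> simp [vectorFieldJacobian]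

end

theorem stmt_10_general (r c m p a : ℝ) (hr : 0 < r) (hm : 0 < m)
    (ha0 : 0 < a) (ha1 : a < 1) :
    (HasFDerivAt (vectorField r c m p a)
        (LinearMap.toContinuousLinearMap (Matrix.toLin' !![-(r * a), 0; 0, -m]))
        ![0, 0] ∧
      -(r * a) < 0 ∧ -m < 0) ∧
    (HasFDerivAt (vectorField r c m p a)
        (LinearMap.toContinuousLinearMap
          (Matrix.toLin' !![r * a * (1 - a), -a; 0, m * (p * a - 1)]))
        ![a, 0] ∧
      0 < r * a * (1 - a) ∧
      (p < 1 / a → m * (p * a - 1) < 0) ∧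
      (1 / a < p → 0 < m * (p * a - 1))) ∧
    (HasFDerivAt (vectorField r c m p a)
        (LinearMap.toContinuousLinearMap
          (Matrix.toLin' !![-(r * (1 - a)), -1; 0, m * (p - 1)]))
        ![1, 0] ∧
      -(r * (1 - a)) < 0 ∧
      (p < 1 → m * (p - 1) < 0) ∧
      (1 < p → 0 < m * (p - 1))) := by
  have hra : 0 < r * a := mul_pos hr ha0
  have hr1a : 0 < r * (1 - a) := mul_pos hr (sub_pos.mpr ha1)
  refine ⟨⟨?_, by linarith, by linarith⟩,
    ⟨?_, mul_pos hra (sub_pos.mpr ha1), fun hpa => ?_, fun hpa => ?_⟩,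
    ⟨?_, by linarith, fun hp1 => ?_, fun hp1 => ?_⟩⟩
  · exact (hasFDerivAt_vectorField_boundary r c m p a 0).congr_fderiv (by ring_nf)
  · exact (hasFDerivAt_vectorField_boundary r c m p a a).congr_fderiv (by ring_nf)
  · exact mul_neg_of_pos_of_neg hm (by linarith [(lt_div_iff₀ ha0).mp hpa])
  · exact mul_pos hm (by linarith [(div_lt_iff₀ ha0).mp hpa])
  · exact (hasFDerivAt_vectorField_boundary r c m p a 1).congr_fderiv (by ring_nf)
  · exact mul_neg_of_pos_of_neg hm (by linarith)
  · exact mul_pos hm (by linarith)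

/-- Jacobian matrices of the system at the boundary equilibria `E₀ = (0,0)`,
`E_a = (a,0)`, `E₁ = (1,0)`, together with the signs of their (diagonal)
eigenvalues. -/
theorem stmt_10 (r c m p a : ℝ) (hr : 0 < r) (hc : 0 < c) (hm : 0 < m) (hp : 0 < p)
    (ha0 : 0 < a) (ha1 : a < 1) :
    (HasFDerivAt (vectorField r c m p a)
        (LinearMap.toContinuousLinearMap (Matrix.toLin' !![-(r * a), 0; 0, -m]))
        ![0, 0] ∧
      -(r * a) < 0 ∧ -m < 0) ∧
    (HasFDerivAt (vectorField r c m p a)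
        (LinearMap.toContinuousLinearMap
          (Matrix.toLin' !![r * a * (1 - a), -a; 0, m * (p * a - 1)]))
        ![a, 0] ∧
      0 < r * a * (1 - a) ∧
      (p < 1 / a → m * (p * a - 1) < 0) ∧
      (1 / a < p → 0 < m * (p * a - 1))) ∧
    (HasFDerivAt (vectorField r c m p a)
        (LinearMap.toContinuousLinearMap
          (Matrix.toLin' !![-(r * (1 - a)), -1; 0, m * (p - 1)]))
        ![1, 0] ∧
      -(r * (1 - a)) < 0 ∧
      (p < 1 → m * (p - 1) < 0) ∧
      (1 < p → 0 < m * (p - 1))) :=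
  stmt_10_general r c m p a hr hm ha0 ha1
end

section
/- Let r, c, m > 0 and 0 < a < 1 with c > 1/(r·(1−a)) (strong cooperation). If 1 ≤ p < 1/a, then the system has a unique interior equilibrium; that is, there is exactly one pair (u, v) with u > 0, v > 0 satisfying r·(1−u)·(u−a) = (1+c·v)·v and p·u·(1+c·v) = 1. -/
open Topology Filter

/-- Strict "monotonicity" contradiction: two distinct roots of the reduced
quartic in `(a, 1/p)` are impossible. -/
lemma stmt_11_mono (r c p a u u' : ℝ) (hr : 0 < r) (hc : 0 < c) (hp1 : 1 ≤ p)
    (ha0 : 0 < a) (hau : a < u) (huu : u < u') (hu'p : p * u' < 1)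
    (h1 : r * c * p ^ 2 * u ^ 2 * (u - a) * (1 - u) = 1 - p * u)
    (h2 : r * c * p ^ 2 * u' ^ 2 * (u' - a) * (1 - u') = 1 - p * u') : False := by
  have hu0 : 0 < u := ha0.trans hau
  have hu'0 : 0 < u' := hu0.trans huu
  have hp0 : 0 < p := lt_of_lt_of_le one_pos hp1
  have hu'1 : u' < 1 := by nlinarith
  have hu1 : u < 1 := huu.trans hu'1
  have hup : p * u < 1 := by nlinarith
  have hfac : u' ^ 2 * (u' - a) - u ^ 2 * (u - a)
      = (u' - u) * (u * (u - a) + u' * (u' - a) + u * u') := by ring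
  have hbr : 0 < u * (u - a) + u' * (u' - a) + u * u' := by nlinarith
  have hA : u ^ 2 * (u - a) < u' ^ 2 * (u' - a) := by
    nlinarith [mul_pos (sub_pos.mpr huu) hbr]
  have ht : (1 - u) * (1 - p * u') ≤ (1 - u') * (1 - p * u) := by nlinarith
  have htp : 0 < (1 - u) * (1 - p * u') :=
    mul_pos (by linarith) (by linarith)
  have hA'pos : 0 < u' ^ 2 * (u' - a) := mul_pos (by positivity) (by linarith)
  have key : u ^ 2 * (u - a) * ((1 - u) * (1 - p * u')) <
      u' ^ 2 * (u' - a) * ((1 - u') * (1 - p * u)) :=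
    calc u ^ 2 * (u - a) * ((1 - u) * (1 - p * u'))
        < u' ^ 2 * (u' - a) * ((1 - u) * (1 - p * u')) :=
          mul_lt_mul_of_pos_right hA htp
      _ ≤ u' ^ 2 * (u' - a) * ((1 - u') * (1 - p * u)) :=
          mul_le_mul_of_nonneg_left ht hA'pos.le
  have e1 : r * c * p ^ 2 * (u ^ 2 * (u - a) * ((1 - u) * (1 - p * u'))) =
      (1 - p * u) * (1 - p * u') := by linear_combination (1 - p * u') * h1
  have e2 : r * c * p ^ 2 * (u' ^ 2 * (u' - a) * ((1 - u') * (1 - p * u))) =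
      (1 - p * u) * (1 - p * u') := by linear_combination (1 - p * u) * h2
  have hrcp : 0 < r * c * p ^ 2 := by positivity
  nlinarith [mul_lt_mul_of_pos_left key hrcp]

/-- From an interior equilibrium we extract the range facts and the reduced
quartic equation, plus the formula for `v`. -/
lemma stmt_11_reduce (r c p a u v : ℝ) (hr : 0 < r) (hc : 0 < c)
    (ha0 : 0 < a) (hp1 : 1 ≤ p) (hu : 0 < u) (hv : 0 < v)
    (he1 : r * (1 - u) * (u - a) = (1 + c * v) * v)
    (he2 : p * u * (1 + c * v) = 1) :
    a < u ∧ p * u < 1 ∧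
      r * c * p ^ 2 * u ^ 2 * (u - a) * (1 - u) = 1 - p * u ∧
      v = (1 - p * u) / (c * p * u) := by
  have hp0 : 0 < p := lt_of_lt_of_le one_pos hp1
  have hw : (1 : ℝ) < 1 + c * v := by nlinarith
  have hup : p * u < 1 := by nlinarith
  have hu1 : u < 1 := by nlinarith
  have hau : a < u := by
    nlinarith [mul_pos (show (0:ℝ) < 1 + c * v by positivity) hv,
      mul_pos hr (show (0:ℝ) < 1 - u by linarith)]
  refine ⟨hau, hup, ?_, ?_⟩
  · linear_combination (c * p ^ 2 * u ^ 2) * he1 + (c * p * u * v + 1) * he2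
  · rw [eq_div_iff (show (c * p * u) ≠ 0 by positivity)]
    linear_combination he2

/-- Under strong cooperation `c > 1/(r(1-a))` and `1 ≤ p < 1/a`, the system has
exactly one interior equilibrium. -/
theorem stmt_11 (r c m p a : ℝ) (hr : 0 < r) (hc : 0 < c) (hm : 0 < m)
    (ha0 : 0 < a) (ha1 : a < 1) (hstrong : 1 / (r * (1 - a)) < c)
    (hp1 : 1 ≤ p) (hpa : p < 1 / a) :
    ∃! uv : ℝ × ℝ, 0 < uv.1 ∧ 0 < uv.2 ∧
      r * (1 - uv.1) * (uv.1 - a) = (1 + c * uv.2) * uv.2 ∧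
      p * uv.1 * (1 + c * uv.2) = 1 := by
  have hp0 : 0 < p := lt_of_lt_of_le one_pos hp1
  have h1a : 0 < 1 - a := by linarith
  have hra : 0 < r * (1 - a) := by positivity
  have hca : 1 < c * (r * (1 - a)) := (div_lt_iff₀ hra).mp hstrong
  have hap : p * a < 1 := (lt_div_iff₀ ha0).mp hpa
  have ha1p : a < 1 / p := by rw [lt_div_iff₀ hp0]; nlinarith
  set g : ℝ → ℝ := fun u => r * c * p ^ 2 * u ^ 2 * (u - a) * (1 - u) - (1 - p * u)
    with hg
  have hgcont : Continuous g := by fun_prop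
  have hga : g a < 0 := by simp only [hg]; nlinarith
  -- find b ∈ (a, 1/p] with 0 < g b
  obtain ⟨b, hab, hbp, hgb⟩ : ∃ b, a < b ∧ b ≤ 1 / p ∧ 0 < g b := by
    rcases eq_or_lt_of_le hp1 with hp | hp
    · -- p = 1
      subst hp
      have hten : Filter.Tendsto (fun u : ℝ => r * c * u ^ 2 * (u - a)) (𝓝 1)
          (𝓝 (r * c * 1 ^ 2 * (1 - a))) := Continuous.tendsto (by fun_prop) 1
      have hgt : 1 < r * c * 1 ^ 2 * (1 - a) := by nlinarith
      have hev1 : ∀ᶠ u in 𝓝[<] (1 : ℝ), 1 < r * c * u ^ 2 * (u - a) :=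
        (hten.mono_left nhdsWithin_le_nhds).eventually (eventually_gt_nhds hgt)
      have hev2 : ∀ᶠ u in 𝓝[<] (1 : ℝ), a < u :=
        Filter.Eventually.filter_mono nhdsWithin_le_nhds (eventually_gt_nhds ha1)
      have hev3 : ∀ᶠ u in 𝓝[<] (1 : ℝ), u < 1 := eventually_mem_nhdsWithin
      obtain ⟨b, h1, h2, h3⟩ := (hev1.and (hev2.and hev3)).exists
      refine ⟨b, h2, by norm_num; exact h3.le, ?_⟩
      simp only [hg]
      nlinarith [h1, h2, h3, ha0]
    · -- p > 1
      refine ⟨1 / p, ha1p, le_refl _, ?_⟩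
      simp only [hg]
      have h2 : 0 < 1 - 1 / p := by rw [sub_pos, div_lt_one hp0]; exact hp
      have h3 : 0 < 1 / p - a := by linarith
      have h1 : p * (1 / p) = 1 := by field_simp
      have hpos : 0 < r * c * p ^ 2 * (1 / p) ^ 2 * (1 / p - a) * (1 - 1 / p) := by
        positivity
      nlinarith [hpos, h1]
  -- IVT
  have hmem : (0 : ℝ) ∈ Set.Icc (g a) (g b) := ⟨hga.le, hgb.le⟩
  obtain ⟨u₀, hu₀I, hgu₀⟩ := intermediate_value_Icc hab.le hgcont.continuousOn hmem
  have hau₀ : a < u₀ := lt_of_le_of_ne hu₀I.1 (fun h => by rw [← h] at hgu₀; linarith)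
  have hu₀b : u₀ < b := lt_of_le_of_ne hu₀I.2 (fun h => by rw [h] at hgu₀; linarith)
  have hu₀p : p * u₀ < 1 := by
    have : u₀ < 1 / p := lt_of_lt_of_le hu₀b hbp
    rwa [lt_div_iff₀ hp0, ← mul_comm] at this
  have hu₀0 : 0 < u₀ := ha0.trans hau₀
  have hu₀1 : u₀ < 1 := by nlinarith
  have hkey : r * c * p ^ 2 * u₀ ^ 2 * (u₀ - a) * (1 - u₀) = 1 - p * u₀ := by
    have := hgu₀; simp only [hg] at this; linarith
  set v₀ : ℝ := (1 - p * u₀) / (c * p * u₀) with hv₀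
  have hv₀0 : 0 < v₀ := by
    apply div_pos (by linarith); positivity
  have hcv₀ : 1 + c * v₀ = 1 / (p * u₀) := by
    rw [hv₀]; field_simp; ring
  refine ⟨(u₀, v₀), ⟨hu₀0, hv₀0, ?_, ?_⟩, ?_⟩
  · -- first equilibrium equation
    show r * (1 - u₀) * (u₀ - a) = (1 + c * v₀) * v₀
    rw [hcv₀, hv₀, div_mul_div_comm, eq_div_iff (by positivity)]
    linear_combination hkey
  · show p * u₀ * (1 + c * v₀) = 1
    rw [hcv₀]; field_simp
  · rintro ⟨u, v⟩ ⟨hu, hv, he1, he2⟩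
    obtain ⟨hau, hup, heq, hveq⟩ :=
      stmt_11_reduce r c p a u v hr hc ha0 hp1 hu hv he1 he2
    have huu : u = u₀ := by
      rcases lt_trichotomy u u₀ with h | h | h
      · exact absurd (stmt_11_mono r c p a u u₀ hr hc hp1 ha0 hau h hu₀p heq hkey) id
      · exact h
      · exact absurd (stmt_11_mono r c p a u₀ u hr hc hp1 ha0 hau₀ h hup hkey heq) id
    have hvv : v = v₀ := by rw [hveq, huu, hv₀]
    simp [huu, hvv]
end

section
/- Let r, c, m > 0 and 0 < a < 1 with c > 1/(r·(1−a)) (strong cooperation). Then there exists p_SN ∈ (0, 1) such that: (a) for every p with p_SN < p < 1 the system has exactly two interior equilibria; (b) for p = p_SN the system has exactly one interior equilibrium; and (c) for 0 < p < p_SN the system has no interior equilibrium. -/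
/-!
Write `T = 1 / p` and `k = c r`. Since `u (1 + c v) = T`, eliminating `v` shows that the interior
equilibria are the points `(u, (T / u - 1) / c)` with `a < u < 1` and `φ u = T`, where `φ u` is the
positive root `T` of `P = T (T - u) - k u² (1 - u) (u - a) = 0`. The function `φ` is continuous,
`φ a = a`, `φ 1 = 1`, and strong cooperation, `k (1 - a) > 1`, pushes its maximum `M` on `[a, 1]`
above `1`; so `p_SN = 1 / M`.

In the variable `z = T / u = 1 + c v` the equation `P = 0` becomes the quartic
`D z = z³ (z - 1) + k (z - T) (a z - T) = 0`, strictly convex for `z ≥ 1/2`. Hence if `φ ≥ T` at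
`x < z` (with `z ≤ 2 T`), then `φ > T` strictly between them: a level `T > 1` is attained at most
twice, and the maximum only once.
-/

def IsInteriorEquilibrium (r c a p u v : ℝ) : Prop :=
  0 < u ∧ 0 < v ∧ r * (1 - u) * (u - a) = (1 + c * v) * v ∧ p * u * (1 + c * v) = 1

open Set Filter Topology

namespace CoopHunting

variable {k a T u x y z : ℝ}

def H (k a u : ℝ) : ℝ := k * u ^ 2 * ((1 - u) * (u - a))

noncomputable def φ (k a u : ℝ) : ℝ := (u + Real.sqrt (u ^ 2 + 4 * H k a u)) / 2

def P (k a T u : ℝ) : ℝ := T * (T - u) - H k a u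

def D (k a T z : ℝ) : ℝ := z ^ 3 * (z - 1) + k * (z - T) * (a * z - T)

lemma H_nonneg (hk : 0 ≤ k) (hau : a ≤ u) (hu1 : u ≤ 1) : 0 ≤ H k a u := by
  have := mul_nonneg (sub_nonneg.2 hu1) (sub_nonneg.2 hau)
  unfold H; positivity

lemma H_pos (hk : 0 < k) (ha : 0 ≤ a) (hau : a < u) (hu1 : u < 1) : 0 < H k a u := by
  have := mul_pos (sub_pos.2 hu1) (sub_pos.2 hau)
  have : 0 < u := ha.trans_lt hau
  unfold H; positivity

lemma self_le_phi (hH : 0 ≤ H k a u) : u ≤ φ k a u := by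
  have : u ≤ Real.sqrt (u ^ 2 + 4 * H k a u) :=
    (Real.le_sqrt_of_sq_le (by linarith))
  unfold φ; linarith

lemma self_lt_phi (hH : 0 < H k a u) : u < φ k a u := by
  have : u < Real.sqrt (u ^ 2 + 4 * H k a u) :=
    (Real.lt_sqrt_of_sq_lt (by linarith))
  unfold φ; linarith

lemma P_eq_mul (hH : 0 ≤ H k a u) : P k a T u = (T + φ k a u - u) * (T - φ k a u) := by
  have := Real.sq_sqrt (by positivity : 0 ≤ u ^ 2 + 4 * H k a u)
  unfold P φ
  linear_combination (1 / 4 : ℝ) * this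

lemma add_phi_sub_pos (hH : 0 ≤ H k a u) (hT : 0 < T) : 0 < T + φ k a u - u := by
  linarith [self_le_phi hH]

lemma P_eq_zero_iff (hH : 0 ≤ H k a u) (hT : 0 < T) : P k a T u = 0 ↔ T = φ k a u := by
  rw [P_eq_mul hH, mul_eq_zero, or_iff_right (add_phi_sub_pos hH hT).ne', sub_eq_zero]

lemma P_neg_iff (hH : 0 ≤ H k a u) (hT : 0 < T) : P k a T u < 0 ↔ T < φ k a u := by
  simpa [P_eq_mul hH] using
    mul_lt_mul_iff_right₀ (b := T - φ k a u) (c := 0) (add_phi_sub_pos hH hT)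

lemma P_nonpos_iff (hH : 0 ≤ H k a u) (hT : 0 < T) : P k a T u ≤ 0 ↔ T ≤ φ k a u := by
  simpa [P_eq_mul hH] using
    mul_le_mul_iff_right₀ (b := T - φ k a u) (c := 0) (add_phi_sub_pos hH hT)

lemma D_div (hu : u ≠ 0) : D k a T (T / u) = (T / u ^ 2) ^ 2 * P k a T u := by
  unfold D P H
  field_simp
  ring

/-- The last factor is the second divided difference of `D` at `x, y, z`. -/
lemma D_interpolate (k a T x y z : ℝ) :
    (z - x) * D k a T y = (z - y) * D k a T x + (y - x) * D k a T z -
      (z - y) * (y - x) * (z - x) *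
        (x ^ 2 + y ^ 2 + z ^ 2 + x * y + y * z + z * x - (x + y + z) + k * a) := by
  unfold D; ring

lemma D_neg_of_lt_of_lt (hka : 0 ≤ k * a) (hx : 1 / 2 ≤ x) (hxy : x < y) (hyz : y < z)
    (hDx : D k a T x ≤ 0) (hDz : D k a T z ≤ 0) : D k a T y < 0 := by
  have hQ : 0 < x ^ 2 + y ^ 2 + z ^ 2 + x * y + y * z + z * x - (x + y + z) + k * a := by
    nlinarith
  have hprod := mul_pos (mul_pos (mul_pos (sub_pos.2 hyz) (sub_pos.2 hxy))
    (sub_pos.2 (hxy.trans hyz))) hQ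
  have : (z - x) * D k a T y < 0 := by
    rw [D_interpolate]
    nlinarith [mul_nonpos_of_nonneg_of_nonpos (sub_pos.2 hyz).le hDx,
      mul_nonpos_of_nonneg_of_nonpos (sub_pos.2 hxy).le hDz]
  exact neg_of_mul_neg_right this (sub_pos.2 (hxy.trans hyz)).le

lemma lt_phi_of_lt_of_lt (hk : 0 ≤ k) (ha : 0 < a) (hax : a ≤ x) (hxy : x < y) (hyz : y < z)
    (hz1 : z ≤ 1) (hzT : z ≤ 2 * T) (hx : T ≤ φ k a x) (hz : T ≤ φ k a z) : T < φ k a y := by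
  have hx0 : 0 < x := ha.trans_le hax
  have hy0 : 0 < y := hx0.trans hxy
  have hz0 : 0 < z := hy0.trans hyz
  have hT : 0 < T := by linarith
  have hHx := H_nonneg hk hax ((hxy.trans hyz).le.trans hz1)
  have hHy := H_nonneg hk (hax.trans hxy.le) (hyz.le.trans hz1)
  have hHz := H_nonneg hk (hax.trans (hxy.trans hyz).le) hz1
  have hDx : D k a T (T / x) ≤ 0 := by
    rw [D_div hx0.ne']
    exact mul_nonpos_of_nonneg_of_nonpos (sq_nonneg _) ((P_nonpos_iff hHx hT).2 hx)
  have hDz : D k a T (T / z) ≤ 0 := by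
    rw [D_div hz0.ne']
    exact mul_nonpos_of_nonneg_of_nonpos (sq_nonneg _) ((P_nonpos_iff hHz hT).2 hz)
  have hDy : D k a T (T / y) < 0 :=
    D_neg_of_lt_of_lt (mul_nonneg hk ha.le) (by rw [le_div_iff₀ hz0]; linarith)
      (div_lt_div_of_pos_left hT hy0 hyz) (div_lt_div_of_pos_left hT hx0 hxy) hDz hDx
  rw [D_div hy0.ne'] at hDy
  exact (P_neg_iff hHy hT).1 (neg_of_mul_neg_right hDy (sq_nonneg _))

lemma continuous_phi : Continuous (φ k a) := by
  unfold φ H; fun_prop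

lemma phi_left (ha : 0 ≤ a) : φ k a a = a := by
  simp [φ, H, Real.sqrt_sq ha]

lemma phi_one : φ k a 1 = 1 := by
  norm_num [φ, H]

lemma exists_one_lt_phi (ha1 : a < 1) (hstrong : 1 < k * (1 - a)) :
    ∃ u ∈ Ioo a 1, 1 < φ k a u := by
  have hk : 0 ≤ k := by nlinarith
  have hcont : Continuous fun u : ℝ => k * u ^ 2 * (u - a) := by fun_prop
  have hev : ∀ᶠ u in 𝓝[<] 1, 1 < k * u ^ 2 * (u - a) ∧ u ∈ Ioo a 1 :=
    ((continuousAt_const.eventually_lt hcont.continuousAt (x₀ := 1) (by simpa)).filter_mono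
      nhdsWithin_le_nhds).and (Ioo_mem_nhdsLT ha1)
  obtain ⟨u, hgu, hau, hu1⟩ := hev.exists
  refine ⟨u, ⟨hau, hu1⟩, (P_neg_iff (H_nonneg hk hau.le hu1.le) one_pos).1 ?_⟩
  have : P k a 1 u = (1 - u) * (1 - k * u ^ 2 * (u - a)) := by unfold P H; ring
  rw [this]
  exact mul_neg_of_pos_of_neg (sub_pos.2 hu1) (by linarith)

lemma exists_isMaxOn_phi (ha : 0 ≤ a) (ha1 : a < 1) (hstrong : 1 < k * (1 - a)) :
    ∃ u₀ ∈ Ioo a 1, 1 < φ k a u₀ ∧ IsMaxOn (φ k a) (Icc a 1) u₀ := by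
  obtain ⟨u₀, hu₀, hmax⟩ :=
    isCompact_Icc.exists_isMaxOn (nonempty_Icc.2 ha1.le) continuous_phi.continuousOn
  obtain ⟨u, hu, hu1⟩ := exists_one_lt_phi ha1 hstrong
  have h1 : 1 < φ k a u₀ := hu1.trans_le (hmax (Ioo_subset_Icc_self hu))
  refine ⟨u₀, ⟨hu₀.1.lt_of_ne ?_, hu₀.2.lt_of_ne ?_⟩, h1, hmax⟩
  · rintro rfl; rw [phi_left ha] at h1; linarith
  · rintro rfl; rw [phi_one] at h1; exact h1.false

lemma eq_or_eq_of_phi_eq (hk : 0 ≤ k) (ha : 0 < a) (hax : a < x) (hxy : x < y) (hy1 : y < 1)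
    (hx : φ k a x = T) (hy : φ k a y = T) (hu : u ∈ Ioo a 1) (huT : φ k a u = T) :
    u = x ∨ u = y := by
  have key : ∀ x y z, a ≤ x → x < y → y < z → z ≤ 1 → φ k a x = T → φ k a z = T →
      T < φ k a y := by
    intro x y z hax hxy hyz hz1 hx hz
    have hzT : z ≤ T := hz ▸ self_le_phi (H_nonneg hk (hax.trans (hxy.trans hyz).le) hz1)
    exact lt_phi_of_lt_of_lt hk ha hax hxy hyz hz1 (by linarith) hx.ge hz.ge
  rcases lt_trichotomy u x with h | rfl | h
  · exact absurd hx (key u x y hu.1.le h hxy hy1.le huT hy).ne'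
  · exact Or.inl rfl
  rcases lt_trichotomy u y with h' | rfl | h'
  · exact absurd huT (key x u y hax.le h h' hy1.le hx hy).ne'
  · exact Or.inr rfl
  · exact absurd hy (key x y u hax.le hxy h' hu.2.le hx huT).ne'

lemma eq_of_isMaxOn_phi (hk : 0 ≤ k) (ha : 0 < a) (hmax : IsMaxOn (φ k a) (Icc a 1) x)
    (hx : x ∈ Icc a 1) (hy : y ∈ Icc a 1) (hxy : φ k a y = φ k a x) : y = x := by
  have key : ∀ s t, s ∈ Icc a 1 → t ∈ Icc a 1 → s < t → φ k a s = φ k a x →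
      φ k a t = φ k a x → False := by
    intro s t hs ht hst hs' ht'
    have htT : t ≤ φ k a x := ht' ▸ self_le_phi (H_nonneg hk ht.1 ht.2)
    have hmid : (s + t) / 2 ∈ Icc a 1 := ⟨by linarith [hs.1], by linarith [ht.2]⟩
    exact (hmax hmid).not_gt (lt_phi_of_lt_of_lt hk ha hs.1 (by linarith) (by linarith) ht.2
      (by linarith [ht.1]) hs'.ge ht'.ge)
  rcases lt_trichotomy y x with h | h | h
  · exact (key y x hy hx h hxy rfl).elim
  · exact h
  · exact (key x y hx hy h rfl hxy).elim

lemma exists_two_phi_eq (ha : 0 ≤ a) (hu : u ∈ Ioo a 1) (h1T : 1 < T)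
    (hT : T < φ k a u) : ∃ x y, a < x ∧ x < y ∧ y < 1 ∧ φ k a x = T ∧ φ k a y = T := by
  obtain ⟨x, hx, hxT⟩ := intermediate_value_Ioo hu.1.le continuous_phi.continuousOn
    ⟨by rw [phi_left ha]; linarith [hu.1, hu.2], hT⟩
  obtain ⟨y, hy, hyT⟩ := intermediate_value_Ioo' hu.2.le continuous_phi.continuousOn
    ⟨by rwa [phi_one], hT⟩
  exact ⟨x, y, hx.1, hx.2.trans hy.1, hy.2, hxT, hyT⟩

end CoopHunting

open CoopHunting in
lemma isInteriorEquilibrium_iff {r c a p u v : ℝ} (hr : 0 < r) (hc : 0 < c) (ha : 0 ≤ a)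
    (ha1 : a < 1) (hp : 0 < p) :
    IsInteriorEquilibrium r c a p u v ↔
      a < u ∧ u < 1 ∧ φ (c * r) a u = 1 / p ∧ v = (1 / (p * u) - 1) / c := by
  have hk : 0 < c * r := mul_pos hc hr
  constructor
  · rintro ⟨hu, hv, hprey, hpred⟩
    have hw : 1 + c * v = 1 / (p * u) := eq_one_div_of_mul_eq_one_right hpred
    have hT : u * (1 + c * v) = 1 / p :=
      eq_one_div_of_mul_eq_one_right (by linear_combination hpred)
    have hprod : 0 < (1 - u) * (u - a) := by
      have : 0 < r * ((1 - u) * (u - a)) := by rw [← mul_assoc, hprey]; positivity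
      exact pos_of_mul_pos_right this hr.le
    have hau : a < u := by nlinarith
    have hu1 : u < 1 := by nlinarith
    have hH := H_nonneg hk.le hau.le hu1.le
    refine ⟨hau, hu1, ((P_eq_zero_iff hH (by positivity)).1 ?_).symm, ?_⟩
    · rw [← hT]; unfold P H
      linear_combination (-(c * u ^ 2)) * hprey
    · rw [← hw]; field_simp; ring
  · rintro ⟨hau, hu1, hφ, rfl⟩
    have hu : 0 < u := ha.trans_lt hau
    have hP : P (c * r) a (1 / p) u = 0 :=
      (P_eq_zero_iff (H_nonneg hk.le hau.le hu1.le) (by positivity)).2 hφ.symm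
    have huT : u < 1 / p := hφ ▸ self_lt_phi (H_pos hk ha hau hu1)
    have hpu : p * u < 1 := by rwa [lt_div_iff₀ hp, mul_comm] at huT
    have hv : 0 < (1 / (p * u) - 1) / c :=
      div_pos (sub_pos.2 (one_lt_one_div (by positivity) hpu)) hc
    refine ⟨hu, hv, ?_, by field_simp; ring⟩
    unfold P H at hP
    field_simp at hP ⊢
    linear_combination -hP

open CoopHunting in
theorem stmt_12_general (r c a : ℝ) (hr : 0 < r) (hc : 0 < c)
    (ha0 : 0 < a) (ha1 : a < 1) (hstrong : 1 / (r * (1 - a)) < c) :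
    ∃ pSN : ℝ, 0 < pSN ∧ pSN < 1 ∧
      (∀ p : ℝ, pSN < p → p < 1 →
        ∃ u₁ v₁ u₂ v₂ : ℝ, (u₁, v₁) ≠ (u₂, v₂) ∧
          IsInteriorEquilibrium r c a p u₁ v₁ ∧
          IsInteriorEquilibrium r c a p u₂ v₂ ∧
          ∀ u v : ℝ, IsInteriorEquilibrium r c a p u v →
            (u, v) = (u₁, v₁) ∨ (u, v) = (u₂, v₂)) ∧
      (∃! uv : ℝ × ℝ, IsInteriorEquilibrium r c a pSN uv.1 uv.2) ∧
      (∀ p : ℝ, 0 < p → p < pSN → ¬ ∃ u v : ℝ, IsInteriorEquilibrium r c a p u v) := by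
  have hk : 0 < c * r := mul_pos hc hr
  have equil {p u v : ℝ} (hp : 0 < p) :=
    isInteriorEquilibrium_iff (u := u) (v := v) hr hc ha0.le ha1 hp
  obtain ⟨u₀, hu₀, hM, hmax⟩ := exists_isMaxOn_phi ha0.le ha1
    (by rwa [div_lt_iff₀ (mul_pos hr (sub_pos.2 ha1)), ← mul_assoc] at hstrong)
  set M := φ (c * r) a u₀
  have hM0 : 0 < M := one_pos.trans hM
  refine ⟨1 / M, by positivity, (div_lt_one hM0).2 hM, fun p hp hp1 => ?_, ?_, ?_⟩
  · have hp0 : 0 < p := (one_div_pos.2 hM0).trans hp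
    obtain ⟨x, y, hax, hxy, hy1, hx, hy⟩ := exists_two_phi_eq ha0.le hu₀
      (one_lt_one_div hp0 hp1) ((one_div_lt hp0 hM0).2 hp)
    refine ⟨x, _, y, _, fun h => hxy.ne (Prod.ext_iff.1 h).1,
      (equil hp0).2 ⟨hax, hxy.trans hy1, hx, rfl⟩, (equil hp0).2 ⟨hax.trans hxy, hy1, hy, rfl⟩,
      fun u v huv => ?_⟩
    obtain ⟨hau, hu1, hu, rfl⟩ := (equil hp0).1 huv
    rcases eq_or_eq_of_phi_eq hk.le ha0 hax hxy hy1 hx hy ⟨hau, hu1⟩ hu with rfl | rfl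
    exacts [Or.inl rfl, Or.inr rfl]
  · have hp : 0 < 1 / M := by positivity
    refine ⟨(u₀, (1 / (1 / M * u₀) - 1) / c),
      (equil hp).2 ⟨hu₀.1, hu₀.2, (one_div_one_div M).symm, rfl⟩, ?_⟩
    rintro ⟨u, v⟩ (huv : IsInteriorEquilibrium r c a (1 / M) u v)
    obtain ⟨hau, hu1, hu, rfl⟩ := (equil hp).1 huv
    rw [one_div_one_div] at hu
    obtain rfl := eq_of_isMaxOn_phi hk.le ha0 hmax (Ioo_subset_Icc_self hu₀) ⟨hau.le, hu1.le⟩ hu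
    rfl
  · rintro p hp hpM ⟨u, v, huv⟩
    obtain ⟨hau, hu1, hu, -⟩ := (equil hp).1 huv
    have hle : φ (c * r) a u ≤ M := hmax ⟨hau.le, hu1.le⟩
    linarith [(lt_one_div hp hM0).1 hpM]

/-- Under strong cooperation there is a saddle-node value `p_SN ∈ (0,1)`:
exactly two interior equilibria for `p_SN < p < 1`, exactly one at `p = p_SN`,
and none for `0 < p < p_SN`. -/
theorem stmt_12 (r c m a : ℝ) (hr : 0 < r) (hc : 0 < c) (hm : 0 < m)
    (ha0 : 0 < a) (ha1 : a < 1) (hstrong : 1 / (r * (1 - a)) < c) :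
    ∃ pSN : ℝ, 0 < pSN ∧ pSN < 1 ∧
      (∀ p : ℝ, pSN < p → p < 1 →
        ∃ u₁ v₁ u₂ v₂ : ℝ, (u₁, v₁) ≠ (u₂, v₂) ∧
          IsInteriorEquilibrium r c a p u₁ v₁ ∧
          IsInteriorEquilibrium r c a p u₂ v₂ ∧
          ∀ u v : ℝ, IsInteriorEquilibrium r c a p u v →
            (u, v) = (u₁, v₁) ∨ (u, v) = (u₂, v₂)) ∧
      (∃! uv : ℝ × ℝ, IsInteriorEquilibrium r c a pSN uv.1 uv.2) ∧
      (∀ p : ℝ, 0 < p → p < pSN → ¬ ∃ u v : ℝ, IsInteriorEquilibrium r c a p u v) :=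
  stmt_12_general r c a hr hc ha0 ha1 hstrong
end

section
/- Let r, c, m > 0 and 0 < a < 1 with c > 1/(r·(1−a)), and let p ∈ (p_SN, 1) be such that the system has exactly two interior equilibria (u*, v*) and (u_R, v_R) with u* < u_R. Then the determinant of the Jacobian at (u*, v*), namely m·p·u*·v*·[r·c·u*·(1+a−2u*) + (1+c·v*)·(1+2c·v*)], is strictly positive, while the determinant of the Jacobian at (u_R, v_R), namely m·p·u_R·v_R·[r·c·u_R·(1+a−2u_R) + (1+c·v_R)·(1+2c·v_R)], is strictly negative; in particular (u_R, v_R) is a saddle point (the Jacobian there has one positive and one negative real eigenvalue). -/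
/-!
Eliminating `v` by `p u (1 + c v) = 1`, the `u`-coordinates of interior equilibria are roots
of the quartic `H x = k x² (1 - x) (x - a) + p x - 1` with `k = c p² r`, and at an equilibrium
the Jacobian determinant equals `m v H'(u) / p`. Dividing `H` by `(x - u) (x - u_R)` leaves
`-k Q` with `Q` a monic quadratic, so `H'(u) = k (u_R - u) Q(u)` and
`H'(u_R) = -k (u_R - u) Q(u_R)`. Finally `Q > 0` on `(0, ∞)`: otherwise all four roots `ρᵢ`
of `H` would be positive, and Vieta's formulas give `∑ 1 / ρᵢ = p`, contradicting `p u < 1`.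
-/

def equilibriumPoly (k a p x : ℝ) : ℝ := k * x ^ 2 * (1 - x) * (x - a) + p * x - 1

def equilibriumPolyDeriv (k a p x : ℝ) : ℝ :=
  k * (2 * x * (1 - x) * (x - a) + x ^ 2 * (1 + a - 2 * x)) + p

theorem hasDerivAt_equilibriumPoly (k a p x : ℝ) :
    HasDerivAt (equilibriumPoly k a p) (equilibriumPolyDeriv k a p x) x := by
  have hx : HasDerivAt (fun y : ℝ ↦ y) 1 x := hasDerivAt_id' x
  have := ((((hasDerivAt_pow 2 x).const_mul k).fun_mul (hx.const_sub 1)).fun_mul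
    (hx.sub_const a)).fun_add (hx.const_mul p) |>.sub_const 1
  exact this.congr_deriv (by unfold equilibriumPolyDeriv; push_cast; ring)

theorem HasDerivAt.eq_of_forall_eq_sub_mul {𝕜 : Type*} [NontriviallyNormedField 𝕜]
    {f g : 𝕜 → 𝕜} {f' u : 𝕜} (hf : HasDerivAt f f' u) (hg : DifferentiableAt 𝕜 g u)
    (hfg : ∀ x, f x = (x - u) * g x) : f' = g u := by
  have := ((hasDerivAt_id' u).sub_const u).fun_mul hg.hasDerivAt
  rw [← funext hfg] at this
  simpa using hf.unique this

theorem equilibriumPoly_factor {k a p u w : ℝ} (hne : u ≠ w) (hu : equilibriumPoly k a p u = 0)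
    (hw : equilibriumPoly k a p w = 0) :
    ∃ B D : ℝ, (∀ x, equilibriumPoly k a p x = -k * (x - u) * (x - w) * (x ^ 2 + B * x + D)) ∧
      k * (u * w) * D = 1 ∧ k * ((u + w) * D - u * w * B) = p := by
  obtain ⟨B, hB⟩ : ∃ B, B = u + w - (1 + a) := ⟨_, rfl⟩
  obtain ⟨D, hD⟩ : ∃ D, D = a + (u + w) * B - u * w := ⟨_, rfl⟩
  have hrem (x : ℝ) : equilibriumPoly k a p x + k * (x - u) * (x - w) * (x ^ 2 + B * x + D)
      = (p - k * ((u + w) * D - u * w * B)) * x + (k * (u * w) * D - 1) := by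
    subst hD hB; unfold equilibriumPoly; ring
  have hα : p - k * ((u + w) * D - u * w * B) = 0 := by
    refine (mul_eq_zero.mp ?_).resolve_right (sub_ne_zero.mpr hne)
    linear_combination hrem w - hrem u + hu - hw
  have hβ : k * (u * w) * D - 1 = 0 := by
    linear_combination hu - hrem u - u * hα
  exact ⟨B, D, fun x ↦ by linear_combination hrem x + x * hα + hβ, by linarith, by linarith⟩

theorem exists_pos_roots_of_nonpos {B D t : ℝ} (hD : 0 < D) (ht : 0 < t)
    (hQ : t ^ 2 + B * t + D ≤ 0) : ∃ ρ σ : ℝ, 0 < ρ ∧ 0 < σ ∧ B = -(ρ + σ) ∧ D = ρ * σ := by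
  have hdisc : 0 ≤ discrim 1 B D := by
    rw [discrim]; nlinarith [sq_nonneg (2 * t + B)]
  obtain ⟨ρ, hρ⟩ := exists_quadratic_eq_zero one_ne_zero
    ⟨_, (Real.mul_self_sqrt hdisc).symm⟩
  have hfac : t ^ 2 + B * t + D = (t - ρ) * (t - (-B - ρ)) := by
    linear_combination hρ
  have hprod : D = ρ * (-B - ρ) := by linear_combination hρ
  have hρ_pos : 0 < ρ := by
    by_contra! h
    nlinarith [mul_pos (show 0 < t - ρ by linarith) (show 0 < t - (-B - ρ) by nlinarith)]
  exact ⟨ρ, -B - ρ, hρ_pos, by nlinarith, by ring, hprod⟩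

/- `h₀` and `h₁` say that `-k (x - u) (x - w) (x² + B x + D)` has constant term `-1` and linear
coefficient `p`. -/
theorem quadratic_cofactor_pos {k p u w B D t : ℝ} (hk : 0 < k) (hu : 0 < u) (hw : 0 < w)
    (hpu : p * u < 1) (h₀ : k * (u * w) * D = 1) (h₁ : k * ((u + w) * D - u * w * B) = p)
    (ht : 0 < t) : 0 < t ^ 2 + B * t + D := by
  have hD : 0 < D := pos_of_mul_pos_right (h₀ ▸ one_pos) (by positivity)
  by_contra! hQ
  obtain ⟨ρ, σ, hρ, hσ, rfl, rfl⟩ := exists_pos_roots_of_nonpos hD ht hQ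
  have : 1 < p * u := by
    rw [← h₁, ← h₀]
    have hρσ : 0 < u * (ρ * σ) + u * w * (ρ + σ) := by positivity
    nlinarith [mul_pos (mul_pos hk hu) hρσ]
  linarith

theorem exists_neg_pos_roots_of_neg {T d : ℝ} (hd : d < 0) :
    ∃ l₁ l₂ : ℝ, l₁ < 0 ∧ 0 < l₂ ∧ l₁ ^ 2 - T * l₁ + d = 0 ∧ l₂ ^ 2 - T * l₂ + d = 0 := by
  have hdisc : 0 ≤ T ^ 2 - 4 * d := by nlinarith [sq_nonneg T]
  set s := √(T ^ 2 - 4 * d)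
  have hs : s ^ 2 = T ^ 2 - 4 * d := Real.sq_sqrt hdisc
  have hs₀ : 0 ≤ s := Real.sqrt_nonneg _
  have hTs : |T| < s := abs_lt_of_sq_lt_sq (by nlinarith) hs₀
  refine ⟨(T - s) / 2, (T + s) / 2, by linarith [le_abs_self T], by linarith [neg_abs_le T], ?_, ?_⟩
  · linear_combination hs / 4
  · linear_combination hs / 4

section Equilibrium

variable {r c p a u v : ℝ}

theorem equilibriumPoly_eq_zero (he₁ : r * (1 - u) * (u - a) = (1 + c * v) * v)
    (he₂ : p * u * (1 + c * v) = 1) : equilibriumPoly (c * p ^ 2 * r) a p u = 0 := by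
  unfold equilibriumPoly
  linear_combination (c * p ^ 2 * u ^ 2) * he₁ + (c * p * u * v + 1) * he₂

theorem equilibriumPolyDeriv_eq (he₁ : r * (1 - u) * (u - a) = (1 + c * v) * v)
    (he₂ : p * u * (1 + c * v) = 1) :
    equilibriumPolyDeriv (c * p ^ 2 * r) a p u =
      p ^ 2 * u * (r * c * u * (1 + a - 2 * u) + (1 + c * v) * (1 + 2 * c * v)) := by
  unfold equilibriumPolyDeriv
  linear_combination (2 * c * p ^ 2 * u) * he₁ - p * he₂

theorem mul_lt_one_of_equilibrium (hp : 0 < p) (hu : 0 < u) (hc : 0 < c) (hv : 0 < v)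
    (he₂ : p * u * (1 + c * v) = 1) : p * u < 1 := by
  nlinarith [mul_pos (mul_pos hp hu) (mul_pos hc hv)]

end Equilibrium

theorem stmt_13_general (r c m p a u v uR vR : ℝ) (hr : 0 < r) (hc : 0 < c) (hm : 0 < m)
    (hp0 : 0 < p)
    (hu : 0 < u) (hv : 0 < v)
    (he1 : r * (1 - u) * (u - a) = (1 + c * v) * v)
    (he2 : p * u * (1 + c * v) = 1)
    (huR : 0 < uR) (hvR : 0 < vR)
    (heR1 : r * (1 - uR) * (uR - a) = (1 + c * vR) * vR)
    (heR2 : p * uR * (1 + c * vR) = 1)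
    (hlt : u < uR) :
    0 < m * p * u * v * (r * c * u * (1 + a - 2 * u) + (1 + c * v) * (1 + 2 * c * v)) ∧
    m * p * uR * vR * (r * c * uR * (1 + a - 2 * uR) + (1 + c * vR) * (1 + 2 * c * vR)) < 0 ∧
    ∃ lam₁ lam₂ : ℝ, lam₁ < 0 ∧ 0 < lam₂ ∧
      lam₁ ^ 2 - (r * uR * (1 + a - 2 * uR) + m * p * c * uR * vR) * lam₁ +
        m * p * uR * vR * (r * c * uR * (1 + a - 2 * uR) + (1 + c * vR) * (1 + 2 * c * vR)) = 0 ∧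
      lam₂ ^ 2 - (r * uR * (1 + a - 2 * uR) + m * p * c * uR * vR) * lam₂ +
        m * p * uR * vR * (r * c * uR * (1 + a - 2 * uR) + (1 + c * vR) * (1 + 2 * c * vR)) = 0 := by
  set k := c * p ^ 2 * r
  have hk : 0 < k := by positivity
  obtain ⟨B, D, hH, h₀, h₁⟩ := equilibriumPoly_factor hlt.ne
    (equilibriumPoly_eq_zero he1 he2) (equilibriumPoly_eq_zero heR1 heR2)
  have hQ : ∀ t, 0 < t → 0 < t ^ 2 + B * t + D := fun t ↦
    quadratic_cofactor_pos hk hu huR (mul_lt_one_of_equilibrium hp0 hu hc hv he2) h₀ h₁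
  have hH'u := (hasDerivAt_equilibriumPoly k a p u).eq_of_forall_eq_sub_mul
    (g := fun x ↦ -k * (x - uR) * (x ^ 2 + B * x + D)) (by fun_prop)
    fun x ↦ by rw [hH]; ring
  have hH'uR := (hasDerivAt_equilibriumPoly k a p uR).eq_of_forall_eq_sub_mul
    (g := fun x ↦ -k * (x - u) * (x ^ 2 + B * x + D)) (by fun_prop)
    fun x ↦ by rw [hH]; ring
  rw [equilibriumPolyDeriv_eq he1 he2] at hH'u
  rw [equilibriumPolyDeriv_eq heR1 heR2] at hH'uR
  have hJ : 0 < r * c * u * (1 + a - 2 * u) + (1 + c * v) * (1 + 2 * c * v) := by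
    refine pos_of_mul_pos_right (a := p ^ 2 * u) ?_ (by positivity)
    rw [hH'u]
    nlinarith [mul_pos (mul_pos hk (sub_pos.mpr hlt)) (hQ u hu)]
  have hJR : r * c * uR * (1 + a - 2 * uR) + (1 + c * vR) * (1 + 2 * c * vR) < 0 := by
    refine neg_of_mul_neg_right (a := p ^ 2 * uR) ?_ (by positivity)
    rw [hH'uR]
    nlinarith [mul_pos (mul_pos hk (sub_pos.mpr hlt)) (hQ uR huR)]
  have hdetR := mul_neg_of_pos_of_neg (by positivity : 0 < m * p * uR * vR) hJR
  exact ⟨by positivity, hdetR, exists_neg_pos_roots_of_neg hdetR⟩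

/-- Under strong cooperation, when there are exactly two interior equilibria
`(u*,v*)` and `(u_R,v_R)` with `u* < u_R`, the Jacobian determinant is positive at
the first and negative at the second; in particular `(u_R,v_R)` is a saddle, i.e.,
the Jacobian there has one negative and one positive real eigenvalue. -/
theorem stmt_13 (r c m p a u v uR vR : ℝ) (hr : 0 < r) (hc : 0 < c) (hm : 0 < m)
    (ha0 : 0 < a) (ha1 : a < 1) (hstrong : 1 / (r * (1 - a)) < c)
    (hp0 : 0 < p) (hp1 : p < 1)
    (hu : 0 < u) (hv : 0 < v)
    (he1 : r * (1 - u) * (u - a) = (1 + c * v) * v)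
    (he2 : p * u * (1 + c * v) = 1)
    (huR : 0 < uR) (hvR : 0 < vR)
    (heR1 : r * (1 - uR) * (uR - a) = (1 + c * vR) * vR)
    (heR2 : p * uR * (1 + c * vR) = 1)
    (hlt : u < uR)
    (honly : ∀ u' v' : ℝ, 0 < u' → 0 < v' →
      r * (1 - u') * (u' - a) = (1 + c * v') * v' → p * u' * (1 + c * v') = 1 →
      (u', v') = (u, v) ∨ (u', v') = (uR, vR)) :
    0 < m * p * u * v * (r * c * u * (1 + a - 2 * u) + (1 + c * v) * (1 + 2 * c * v)) ∧
    m * p * uR * vR * (r * c * uR * (1 + a - 2 * uR) + (1 + c * vR) * (1 + 2 * c * vR)) < 0 ∧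
    ∃ lam₁ lam₂ : ℝ, lam₁ < 0 ∧ 0 < lam₂ ∧
      lam₁ ^ 2 - (r * uR * (1 + a - 2 * uR) + m * p * c * uR * vR) * lam₁ +
        m * p * uR * vR * (r * c * uR * (1 + a - 2 * uR) + (1 + c * vR) * (1 + 2 * c * vR)) = 0 ∧
      lam₂ ^ 2 - (r * uR * (1 + a - 2 * uR) + m * p * c * uR * vR) * lam₂ +
        m * p * uR * vR * (r * c * uR * (1 + a - 2 * uR) + (1 + c * vR) * (1 + 2 * c * vR)) = 0 :=
  stmt_13_general r c m p a u v uR vR hr hc hm hp0 hu hv he1 he2 huR hvR heR1 heR2 hlt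
end

section
/- Let r, m > 0, 0 < a < 1, c > 0, and let I ⊂ (1, 1/a) be an open interval containing a point p_H. Suppose u : I → ℝ is differentiable and satisfies, for every p ∈ I: (a+1)/2 < u(p) < 1/p, r·(1−u(p))·(u(p)−a) = (1−p·u(p))/(c·p²·u(p)²), and u'(p) < 0. Define T(p) = −r·u(p)·(2u(p)−a−1) + m·(1−p·u(p)). Then T'(p_H) > 0. (In particular, −u(p_H) − p_H·u'(p_H) > 0, which is the transversality condition for the Hopf bifurcation.) -/
/-!
Differentiating the equilibrium equation `r c p² u² (1 - u)(u - a) = 1 - p u` along the branch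
gives `(1 + 2 r c p u (1 - u)(u - a)) · (-u - p u') = r c p² u² (-u') (2u - a - 1)`, whose
right-hand side is positive when `u' < 0` and `u > (a + 1)/2`. Hence `-u - p u' > 0`, and
`T' = r (-u') (4u - a - 1) + m (-u - p u')` is a sum of two positive terms.
-/

open Filter Topology

section

variable {r c a p u' : ℝ} {u : ℝ → ℝ}

theorem equilibrium_implicit_deriv (hu : HasDerivAt u u' p)
    (h : ∀ᶠ q in 𝓝 p, r * c * q ^ 2 * u q ^ 2 * ((1 - u q) * (u q - a)) = 1 - q * u q) :
    (1 + 2 * r * c * p * u p * ((1 - u p) * (u p - a))) * (-u p - p * u') =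
      r * c * p ^ 2 * u p ^ 2 * (-u') * (2 * u p - a - 1) := by
  have hL := (((hasDerivAt_pow 2 p).const_mul (r * c)).mul (hu.pow 2)).mul
    ((hu.const_sub 1).mul (hu.sub_const a))
  have hR := ((hasDerivAt_id p).mul hu).const_sub 1
  have hderiv_eq := hL.unique (hR.congr_of_eventuallyEq h)
  simp only [Pi.mul_apply, Pi.pow_apply, id_eq, Nat.cast_ofNat] at hderiv_eq
  linear_combination -hderiv_eq

theorem neg_sub_mul_deriv_pos_of_equilibrium (hu : HasDerivAt u u' p)
    (h : ∀ᶠ q in 𝓝 p, r * c * q ^ 2 * u q ^ 2 * ((1 - u q) * (u q - a)) = 1 - q * u q)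
    (hr : 0 < r) (hc : 0 < c) (hp : 0 < p) (hu0 : 0 < u p) (hu1 : u p < 1)
    (hmid : a + 1 < 2 * u p) (hu' : u' < 0) :
    0 < -u p - p * u' := by
  have hfactor : 0 ≤ 1 + 2 * r * c * p * u p * ((1 - u p) * (u p - a)) := by
    have : 0 < (1 - u p) * (u p - a) := mul_pos (by linarith) (by linarith)
    positivity
  refine pos_of_mul_pos_right ?_ hfactor
  rw [equilibrium_implicit_deriv hu h]
  have : 0 < -u' := neg_pos.2 hu'
  have : 0 < 2 * u p - a - 1 := by linarith
  positivity

end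

theorem hasDerivAt_trace {r m a p u' : ℝ} {u : ℝ → ℝ} (hu : HasDerivAt u u' p) :
    HasDerivAt (fun q => -r * u q * (2 * u q - a - 1) + m * (1 - q * u q))
      (-r * u' * (4 * u p - a - 1) + m * (-u p - p * u')) p := by
  refine (((hu.const_mul (-r)).mul (((hu.const_mul 2).sub_const a).sub_const 1)).add
    ((((hasDerivAt_id p).mul hu).const_sub 1).const_mul m)).congr_deriv ?_
  simp only [id_eq]
  ring

theorem stmt_15_general (r m c a pH q₁ q₂ : ℝ) (hr : 0 < r) (hm : 0 < m) (hc : 0 < c)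
    (ha0 : 0 < a)
    (hsub : Set.Ioo q₁ q₂ ⊆ Set.Ioo 1 (1 / a)) (hmem : pH ∈ Set.Ioo q₁ q₂)
    (u u' : ℝ → ℝ)
    (hderiv : ∀ p ∈ Set.Ioo q₁ q₂, HasDerivAt u (u' p) p)
    (hlow : ∀ p ∈ Set.Ioo q₁ q₂, (a + 1) / 2 < u p)
    (hhigh : ∀ p ∈ Set.Ioo q₁ q₂, u p < 1 / p)
    (heq : ∀ p ∈ Set.Ioo q₁ q₂,
      r * (1 - u p) * (u p - a) = (1 - p * u p) / (c * p ^ 2 * (u p) ^ 2))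
    (hu' : ∀ p ∈ Set.Ioo q₁ q₂, u' p < 0) :
    0 < deriv (fun p => -r * u p * (2 * u p - a - 1) + m * (1 - p * u p)) pH ∧
    0 < -u pH - pH * u' pH := by
  have hpos : ∀ p ∈ Set.Ioo q₁ q₂, 0 < p ∧ 0 < u p := fun p hp =>
    ⟨one_pos.trans (hsub hp).1, by linarith [hlow p hp]⟩
  have hequil : ∀ᶠ q in 𝓝 pH,
      r * c * q ^ 2 * u q ^ 2 * ((1 - u q) * (u q - a)) = 1 - q * u q := by
    filter_upwards [isOpen_Ioo.mem_nhds hmem] with q hq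
    obtain ⟨hq0, huq0⟩ := hpos q hq
    linear_combination (eq_div_iff (by positivity)).1 (heq q hq)
  obtain ⟨hp0, hu0⟩ := hpos pH hmem
  have hu1 : u pH < 1 := (hhigh pH hmem).trans_le ((div_le_one hp0).2 (hsub hmem).1.le)
  have hmid := hlow pH hmem
  have hD := neg_sub_mul_deriv_pos_of_equilibrium (hderiv pH hmem) hequil hr hc hp0 hu0 hu1
    (by linarith) (hu' pH hmem)
  refine ⟨?_, hD⟩
  rw [(hasDerivAt_trace (hderiv pH hmem)).deriv]
  nlinarith [mul_pos (mul_pos hr (neg_pos.2 (hu' pH hmem))) (by linarith : 0 < 4 * u pH - a - 1),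
    mul_pos hm hD]

/-- Transversality condition for the Hopf bifurcation: along the equilibrium
branch `u(p)` with `(a+1)/2 < u(p) < 1/p`, satisfying the equilibrium equation and
`u'(p) < 0`, the trace `T(p) = -r u(p)(2u(p)-a-1) + m(1 - p u(p))` has positive
derivative at `p_H`; in particular `-u(p_H) - p_H u'(p_H) > 0`. -/
theorem stmt_15 (r m c a pH q₁ q₂ : ℝ) (hr : 0 < r) (hm : 0 < m) (hc : 0 < c)
    (ha0 : 0 < a) (ha1 : a < 1)
    (hsub : Set.Ioo q₁ q₂ ⊆ Set.Ioo 1 (1 / a)) (hmem : pH ∈ Set.Ioo q₁ q₂)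
    (u u' : ℝ → ℝ)
    (hderiv : ∀ p ∈ Set.Ioo q₁ q₂, HasDerivAt u (u' p) p)
    (hlow : ∀ p ∈ Set.Ioo q₁ q₂, (a + 1) / 2 < u p)
    (hhigh : ∀ p ∈ Set.Ioo q₁ q₂, u p < 1 / p)
    (heq : ∀ p ∈ Set.Ioo q₁ q₂,
      r * (1 - u p) * (u p - a) = (1 - p * u p) / (c * p ^ 2 * (u p) ^ 2))
    (hu' : ∀ p ∈ Set.Ioo q₁ q₂, u' p < 0) :
    0 < deriv (fun p => -r * u p * (2 * u p - a - 1) + m * (1 - p * u p)) pH ∧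
    0 < -u pH - pH * u' pH :=
  stmt_15_general r m c a pH q₁ q₂ hr hm hc ha0 hsub hmem u u' hderiv hlow hhigh heq hu'
end

section
/- Let r, c, m, p > 0 and 0 < a < 1 with p ≥ 1/a. Then the extinction equilibrium (0,0) is globally asymptotically stable in the open first quadrant: for every pair of differentiable functions u, v : [0, ∞) → ℝ satisfying u'(t) = r·u(t)·(1−u(t))·(u(t)−a) − (1+c·v(t))·u(t)·v(t) and v'(t) = m·v(t)·(p·u(t)·(1+c·v(t)) − 1) with u(0) > 0 and v(0) > 0, one has u(t) → 0 and v(t) → 0 as t → ∞. -/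
/-!
Along positive solutions the predator equation gives `v' ≥ m c v²` as long as `u ≥ a` (because
`p a ≥ 1`), so `1 / v` would reach zero in finite time: the prey must drop below the Allee
threshold `a` at some time `t₁`, and the barrier `u = u(t₁)` is never crossed afterwards. The
quantity `W = m p u + v` satisfies `W' = m p r u (1 - u) (u - a) - m v`, which below a level
`b < a` is at most `-k W` for some `k > 0`; hence `W`, and with it `u` and `v`, decays
exponentially.
-/

open Set Filter Topology

section Calculus

variable {f f' : ℝ → ℝ} {s : ℝ}

theorem antitoneOn_Ici_of_hasDerivAt_nonpos (hf : ∀ t, s ≤ t → HasDerivAt f (f' t) t)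
    (hf' : ∀ t, s ≤ t → f' t ≤ 0) : AntitoneOn f (Ici s) :=
  antitoneOn_of_hasDerivWithinAt_nonpos (convex_Ici s)
    (fun t ht => (hf t ht).continuousAt.continuousWithinAt)
    (fun t ht => (hf t (interior_subset ht)).hasDerivWithinAt)
    (fun t ht => hf' t (interior_subset ht))

theorem pos_of_hasDerivAt_self_mul {g : ℝ → ℝ} (hg : ContinuousOn g (Ici s))
    (hf : ∀ t, s ≤ t → HasDerivAt f (f t * g t) t) (hs : 0 < f s) :
    ∀ t, s ≤ t → 0 < f t := by
  intro T hT
  have hg' : Continuous fun t => g (max t s) :=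
    hg.comp_continuous (continuous_id.max continuous_const) fun t => le_max_right t s
  set G : ℝ → ℝ := fun t => ∫ x in s..t, g (max x s)
  -- `f · exp (-G)` is constant, where `G` is a primitive of `g`
  have hw : ∀ t, s ≤ t → HasDerivAt (fun t => f t * Real.exp (-G t)) 0 t := by
    intro t ht
    have hG : HasDerivAt G (g t) t := by
      simpa only [max_eq_left ht] using (hg'.integral_hasStrictDerivAt s t).hasDerivAt
    exact ((hf t ht).mul hG.neg.exp).congr_deriv (by ring)
  have hconst := constant_of_has_deriv_right_zero
    (fun t ht => (hw t ht.1).continuousAt.continuousWithinAt)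
    (fun t ht => (hw t ht.1).hasDerivWithinAt) T (right_mem_Icc.2 hT)
  simp only [G, intervalIntegral.integral_same, neg_zero, Real.exp_zero, mul_one] at hconst
  exact pos_of_mul_pos_left (hconst ▸ hs) (Real.exp_pos _).le

theorem exists_hasDerivAt_lt_mul_sq {k : ℝ} (hk : 0 < k)
    (hf : ∀ t, s ≤ t → HasDerivAt f (f' t) t) (hpos : ∀ t, s ≤ t → 0 < f t) :
    ∃ t, s ≤ t ∧ f' t < k * f t ^ 2 := by
  by_contra! h
  -- otherwise `1 / f` decreases at rate at least `k` and would reach zero by time `s + 1 / (k f s)`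
  have hanti : AntitoneOn (fun t => (f t)⁻¹ + k * t) (Ici s) := by
    refine antitoneOn_Ici_of_hasDerivAt_nonpos (f' := fun t => -f' t / f t ^ 2 + k)
      (fun t ht => ((hf t ht).inv (hpos t ht).ne').add ((hasDerivAt_id t).const_mul k)
        |>.congr_deriv (by simp)) fun t ht => ?_
    have := hpos t ht
    rw [neg_div, neg_add_nonpos_iff, le_div_iff₀ (by positivity)]
    exact h t ht
  set T := s + (f s)⁻¹ / k
  have hsT : s ≤ T := le_add_of_nonneg_right (by have := hpos s le_rfl; positivity)
  have := hanti self_mem_Ici hsT hsT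
  have hT := hpos T hsT
  simp only [T, mul_add, mul_div_cancel₀ _ hk.ne'] at this
  linarith [inv_pos.2 hT]

theorem tendsto_zero_of_hasDerivAt_le_neg_mul {k : ℝ} (hk : 0 < k)
    (hf : ∀ t, s ≤ t → HasDerivAt f (f' t) t) (hf' : ∀ t, s ≤ t → f' t ≤ -k * f t)
    (hnonneg : ∀ t, s ≤ t → 0 ≤ f t) : Tendsto f atTop (𝓝 0) := by
  have hanti : AntitoneOn (fun t => f t * Real.exp (k * t)) (Ici s) := by
    refine antitoneOn_Ici_of_hasDerivAt_nonpos
      (f' := fun t => (f' t + k * f t) * Real.exp (k * t))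
      (fun t ht => ((hf t ht).mul ((hasDerivAt_id t).const_mul k).exp).congr_deriv (by
        simp only [id, mul_one]; ring)) fun t ht => ?_
    exact mul_nonpos_of_nonpos_of_nonneg (by linarith [hf' t ht]) (Real.exp_pos _).le
  have hbound : Tendsto (fun t => f s * Real.exp (k * s) * Real.exp (-(k * t))) atTop (𝓝 0) := by
    simpa using (Real.tendsto_exp_neg_atTop_nhds_zero.comp
      (tendsto_id.const_mul_atTop hk)).const_mul (f s * Real.exp (k * s))
  refine squeeze_zero' (eventually_ge_atTop s |>.mono hnonneg) ?_ hbound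
  filter_upwards [eventually_ge_atTop s] with t ht
  rw [Real.exp_neg, ← div_eq_mul_inv, le_div_iff₀ (Real.exp_pos _)]
  exact hanti self_mem_Ici ht ht

end Calculus

section PredatorPrey

variable {r c m p a : ℝ} {u v : ℝ → ℝ}

theorem prey_pos
    (hu : ∀ t : ℝ, 0 ≤ t →
      HasDerivAt u (r * u t * (1 - u t) * (u t - a) - (1 + c * v t) * u t * v t) t)
    (hv : ContinuousOn v (Ici 0)) (hu0 : 0 < u 0) : ∀ t, 0 ≤ t → 0 < u t := by
  have hcu : ContinuousOn u (Ici 0) := fun t ht => (hu t ht).continuousAt.continuousWithinAt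
  exact pos_of_hasDerivAt_self_mul
    (g := fun t => r * (1 - u t) * (u t - a) - (1 + c * v t) * v t) (by fun_prop)
    (fun t ht => (hu t ht).congr_deriv (by ring)) hu0

theorem predator_pos
    (hv : ∀ t : ℝ, 0 ≤ t → HasDerivAt v (m * v t * (p * u t * (1 + c * v t) - 1)) t)
    (hu : ContinuousOn u (Ici 0)) (hv0 : 0 < v 0) : ∀ t, 0 ≤ t → 0 < v t := by
  have hcv : ContinuousOn v (Ici 0) := fun t ht => (hv t ht).continuousAt.continuousWithinAt
  exact pos_of_hasDerivAt_self_mul (g := fun t => m * (p * u t * (1 + c * v t) - 1))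
    (by fun_prop) (fun t ht => (hv t ht).congr_deriv (by ring)) hv0

theorem exists_prey_lt_of_one_le_mul (hm : 0 < m) (hc : 0 < c) (hp : 0 < p) (hpa : 1 ≤ p * a)
    (hv : ∀ t : ℝ, 0 ≤ t → HasDerivAt v (m * v t * (p * u t * (1 + c * v t) - 1)) t)
    (hvpos : ∀ t, 0 ≤ t → 0 < v t) : ∃ t, 0 ≤ t ∧ u t < a := by
  obtain ⟨t, ht, hlt⟩ := exists_hasDerivAt_lt_mul_sq (mul_pos hm hc) hv hvpos
  refine ⟨t, ht, lt_of_not_ge fun hau => hlt.not_ge ?_⟩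
  have hpu : 1 ≤ p * u t := hpa.trans (by gcongr)
  have hvt := hvpos t ht
  have : c * v t ≤ p * u t * (1 + c * v t) - 1 := by nlinarith [mul_pos hc hvt]
  calc m * c * v t ^ 2 = m * v t * (c * v t) := by ring
    _ ≤ m * v t * (p * u t * (1 + c * v t) - 1) := by gcongr

theorem prey_le_of_le (hr : 0 ≤ r) (hc : 0 ≤ c) {b s : ℝ} (hb0 : 0 < b) (hba : b ≤ a)
    (hb1 : b ≤ 1) (hs : 0 ≤ s)
    (hu : ∀ t : ℝ, 0 ≤ t →
      HasDerivAt u (r * u t * (1 - u t) * (u t - a) - (1 + c * v t) * u t * v t) t)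
    (hvpos : ∀ t, 0 ≤ t → 0 < v t) (hus : u s ≤ b) : ∀ t, s ≤ t → u t ≤ b := by
  intro t hst
  refine image_le_of_deriv_right_lt_deriv_boundary (B := fun _ => b) (B' := fun _ => 0)
    (fun x hx => (hu x (hs.trans hx.1)).continuousAt.continuousWithinAt)
    (fun x hx => (hu x (hs.trans hx.1)).hasDerivWithinAt) hus
    (fun _ => hasDerivAt_const _ _) (fun x hx hux => ?_) (right_mem_Icc.2 hst)
  have hvx := hvpos x (hs.trans hx.1)
  have hgrowth : r * b * (1 - b) * (b - a) ≤ 0 :=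
    mul_nonpos_of_nonneg_of_nonpos (by have := sub_nonneg.2 hb1; positivity) (by linarith)
  rw [hux]
  nlinarith [mul_pos (mul_pos hb0 hvx) (by positivity : (0:ℝ) < 1 + c * v x)]

theorem hasDerivAt_lyapunov {t : ℝ}
    (hu : HasDerivAt u (r * u t * (1 - u t) * (u t - a) - (1 + c * v t) * u t * v t) t)
    (hv : HasDerivAt v (m * v t * (p * u t * (1 + c * v t) - 1)) t) :
    HasDerivAt (fun t => m * p * u t + v t)
      (m * p * r * u t * (1 - u t) * (u t - a) - m * v t) t :=
  ((hu.const_mul (m * p)).add hv).congr_deriv (by ring)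

theorem tendsto_lyapunov_zero (hr : 0 < r) (hm : 0 < m) (hp : 0 < p) {b s : ℝ} (hba : b < a)
    (hb1 : b < 1) (hs : 0 ≤ s)
    (hu : ∀ t : ℝ, 0 ≤ t →
      HasDerivAt u (r * u t * (1 - u t) * (u t - a) - (1 + c * v t) * u t * v t) t)
    (hv : ∀ t : ℝ, 0 ≤ t → HasDerivAt v (m * v t * (p * u t * (1 + c * v t) - 1)) t)
    (hupos : ∀ t, 0 ≤ t → 0 < u t) (hvpos : ∀ t, 0 ≤ t → 0 < v t)
    (hub : ∀ t, s ≤ t → u t ≤ b) :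
    Tendsto (fun t => m * p * u t + v t) atTop (𝓝 0) := by
  set κ := r * (1 - b) * (a - b)
  have hκ : 0 < κ := by have := sub_pos.2 hb1; have := sub_pos.2 hba; positivity
  refine tendsto_zero_of_hasDerivAt_le_neg_mul (lt_min hκ hm)
    (fun t ht => hasDerivAt_lyapunov (hu t (hs.trans ht)) (hv t (hs.trans ht)))
    (fun t ht => ?_) fun t ht => (add_pos (by have := hupos t (hs.trans ht); positivity)
      (hvpos t (hs.trans ht))).le
  have hut := hupos t (hs.trans ht)
  have hvt := hvpos t (hs.trans ht)
  have hgap : (1 - b) * (a - b) ≤ (1 - u t) * (a - u t) := by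
    have := hub t ht
    gcongr; linarith
  have hmpu : 0 < m * p * u t := by positivity
  calc m * p * r * u t * (1 - u t) * (u t - a) - m * v t
      ≤ -κ * (m * p * u t) - m * v t := by
        have := mul_le_mul_of_nonneg_left hgap (mul_pos hr hmpu).le
        linarith
    _ ≤ -min κ m * (m * p * u t + v t) := by
        nlinarith [min_le_left κ m, min_le_right κ m]

end PredatorPrey

/-- If `p ≥ 1/a`, the extinction equilibrium `(0,0)` is globally asymptotically
stable in the open first quadrant: every positive solution tends to `(0,0)`. -/
theorem stmt_18 (r c m p a : ℝ) (hr : 0 < r) (hc : 0 < c) (hm : 0 < m) (hp : 0 < p)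
    (ha0 : 0 < a) (ha1 : a < 1) (hpa : 1 / a ≤ p)
    (u v : ℝ → ℝ)
    (hu : ∀ t : ℝ, 0 ≤ t →
      HasDerivAt u (r * u t * (1 - u t) * (u t - a) - (1 + c * v t) * u t * v t) t)
    (hv : ∀ t : ℝ, 0 ≤ t →
      HasDerivAt v (m * v t * (p * u t * (1 + c * v t) - 1)) t)
    (hu0 : 0 < u 0) (hv0 : 0 < v 0) :
    Filter.Tendsto u Filter.atTop (nhds 0) ∧ Filter.Tendsto v Filter.atTop (nhds 0) := by
  have hpa' : 1 ≤ p * a := by rw [div_le_iff₀ ha0] at hpa; linarith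
  have hupos := prey_pos hu (fun t ht => (hv t ht).continuousAt.continuousWithinAt) hu0
  have hvpos := predator_pos hv (fun t ht => (hu t ht).continuousAt.continuousWithinAt) hv0
  obtain ⟨t₁, ht₁, hut₁⟩ := exists_prey_lt_of_one_le_mul hm hc hp hpa' hv hvpos
  have hub :=
    prey_le_of_le hr.le hc.le (hupos t₁ ht₁) hut₁.le (hut₁.trans ha1).le ht₁ hu hvpos le_rfl
  have hW := tendsto_lyapunov_zero hr hm hp hut₁ (hut₁.trans ha1) ht₁ hu hv hupos hvpos hub
  have hmp : 0 < m * p := mul_pos hm hp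
  constructor
  · refine squeeze_zero' (eventually_ge_atTop 0 |>.mono fun t ht => (hupos t ht).le) ?_
      (zero_div (m * p) ▸ hW.div_const (m * p))
    filter_upwards [eventually_ge_atTop 0] with t ht
    rw [le_div_iff₀ hmp]
    linarith [hvpos t ht]
  · refine squeeze_zero' (eventually_ge_atTop 0 |>.mono fun t ht => (hvpos t ht).le) ?_ hW
    filter_upwards [eventually_ge_atTop 0] with t ht
    linarith [mul_pos hmp (hupos t ht)]
end
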